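/- arXiv:1104.3024 — 4 statements merged into one kernel-verified Lean document; each statement's English description precedes it below -/
import Mathlib

section
/- Let m ≥ 1. The 2m elements w_k := s_k s_{k+1}⋯s_{m−1} s_m s_{m−1} s_{m−2}⋯s_1 for 1 ≤ k ≤ m−1 and w_{2m−k} := s_k s_{k−1}⋯s_1 for 0 ≤ k ≤ m (so w_{2m} is the identity) are pairwise distinct and are exactly the final elements of W_B^m; moreover each of these products is a reduced expression, i.e. ℓ(w_j) = 2m − j for all 1 ≤ j ≤ 2m. -/
/-! Weyl groups of type B, C, D realized as permutation groups of `ℕ`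
(using indices `1,…,2m+1` resp. `1,…,2m`; all other natural numbers are fixed). -/

/-- The simple reflections `s_i` of `W_B^m`: `s_i = (i,i+1)(2m+1−i,2m+2−i)` for
`i = 1,…,m−1` and `s_m = (m,m+2)`. -/
def sB (m i : ℕ) : Equiv.Perm ℕ :=
  if i = m then Equiv.swap m (m + 2)
  else Equiv.swap i (i + 1) * Equiv.swap (2 * m + 1 - i) (2 * m + 2 - i)

/-- The simple reflections of `W_C^m`: `s_i = (i,i+1)(2m−i,2m+1−i)` for
`i = 1,…,m−1` and `s'_m = (m,m+1)`. -/
def sC (m i : ℕ) : Equiv.Perm ℕ :=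
  if i = m then Equiv.swap m (m + 1)
  else Equiv.swap i (i + 1) * Equiv.swap (2 * m - i) (2 * m + 1 - i)

/-- The simple reflections of `W_D^m`: `s_i = (i,i+1)(2m−i,2m+1−i)` for
`i = 1,…,m−1` and `s_m = (m−1,m+1)(m,m+2)`. -/
def sD (m i : ℕ) : Equiv.Perm ℕ :=
  if i = m then Equiv.swap (m - 1) (m + 1) * Equiv.swap m (m + 2)
  else Equiv.swap i (i + 1) * Equiv.swap (2 * m - i) (2 * m + 1 - i)

/-- The Weyl group `W_B^m` of type `B_m`: permutations of `{1,…,2m+1}` with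
`σ(i) + σ(2m+2−i) = 2m+2` for all `1 ≤ i ≤ 2m+1`. -/
def WB (m : ℕ) : Set (Equiv.Perm ℕ) :=
  {σ | σ 0 = 0 ∧ (∀ i, 2 * m + 1 < i → σ i = i) ∧
      ∀ i, 1 ≤ i → i ≤ 2 * m + 1 → σ i + σ (2 * m + 2 - i) = 2 * m + 2}

/-- The Weyl group `W_C^m` of type `C_m`: permutations of `{1,…,2m}` with
`σ(i) + σ(2m+1−i) = 2m+1` for all `1 ≤ i ≤ 2m`. -/
def WC (m : ℕ) : Set (Equiv.Perm ℕ) :=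
  {σ | σ 0 = 0 ∧ (∀ i, 2 * m < i → σ i = i) ∧
      ∀ i, 1 ≤ i → i ≤ 2 * m → σ i + σ (2 * m + 1 - i) = 2 * m + 1}

/-- The Weyl group `W_D^m` of type `D_m`: elements of `W_C^m` for which
`#{1 ≤ i ≤ m : σ(i) > m}` is even. -/
def WD (m : ℕ) : Set (Equiv.Perm ℕ) :=
  {σ | σ ∈ WC m ∧ Even (((Finset.Icc 1 m).filter (fun i => m < σ i)).card)}

/-- The length of `w ∈ W_B^m`:
`ℓ(w) = #{1 ≤ i ≤ j ≤ m : w(i) > w(j)} + #{1 ≤ i ≤ j ≤ m : w(i)+w(j) > 2m+2}`. -/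
def lenB (m : ℕ) (w : Equiv.Perm ℕ) : ℕ :=
  ((Finset.Icc 1 m ×ˢ Finset.Icc 1 m).filter
    (fun p => p.1 ≤ p.2 ∧ w p.2 < w p.1)).card +
  ((Finset.Icc 1 m ×ˢ Finset.Icc 1 m).filter
    (fun p => p.1 ≤ p.2 ∧ 2 * m + 2 < w p.1 + w p.2)).card

/-- The length of `w ∈ W_C^m`:
`ℓ(w) = #{1 ≤ i < j ≤ m : w(i) > w(j)} + #{1 ≤ i ≤ j ≤ m : w(i)+w(j) > 2m+1}`. -/
def lenC (m : ℕ) (w : Equiv.Perm ℕ) : ℕ :=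
  ((Finset.Icc 1 m ×ˢ Finset.Icc 1 m).filter
    (fun p => p.1 < p.2 ∧ w p.2 < w p.1)).card +
  ((Finset.Icc 1 m ×ˢ Finset.Icc 1 m).filter
    (fun p => p.1 ≤ p.2 ∧ 2 * m + 1 < w p.1 + w p.2)).card

/-- The `D`-length of `w ∈ W_D^m`:
`ℓ_D(w) = #{1 ≤ i < j ≤ m : w(i) > w(j)} + #{1 ≤ i < j ≤ m : w(i)+w(j) > 2m+1}`. -/
def lenD (m : ℕ) (w : Equiv.Perm ℕ) : ℕ :=
  ((Finset.Icc 1 m ×ˢ Finset.Icc 1 m).filter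
    (fun p => p.1 < p.2 ∧ w p.2 < w p.1)).card +
  ((Finset.Icc 1 m ×ˢ Finset.Icc 1 m).filter
    (fun p => p.1 < p.2 ∧ 2 * m + 1 < w p.1 + w p.2)).card

/-- The ascending product `s_a s_{a+1} ⋯ s_b` (the empty product `1` if `b < a`). -/
def prodAsc (s : ℕ → Equiv.Perm ℕ) (a b : ℕ) : Equiv.Perm ℕ :=
  ((List.range' a (b + 1 - a)).map s).prod

/-- The descending product `s_b s_{b−1} ⋯ s_a` (the empty product `1` if `b < a`). -/
def prodDesc (s : ℕ → Equiv.Perm ℕ) (a b : ℕ) : Equiv.Perm ℕ :=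
  (((List.range' a (b + 1 - a)).map s).reverse).prod

/-- `w ∈ W_B^m` is final if `w(1) ≠ m+1` and `w(2) < ⋯ < w(m)` are the `m−1`
smallest positive integers distinct from `w(1)` and from `2m+2−w(1)`. -/
def FinalB (m : ℕ) (w : Equiv.Perm ℕ) : Prop :=
  w 1 ≠ m + 1 ∧
  (∀ i j, 2 ≤ i → i < j → j ≤ m → w i < w j) ∧
  (∀ b i, 2 ≤ i → i ≤ m → 1 ≤ b → b ≠ w 1 → b ≠ 2 * m + 2 - w 1 → b < w i →
    ∃ j, 2 ≤ j ∧ j ≤ m ∧ w j = b)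

/-- The `j`-th final element of `W_B^m` (for `1 ≤ j ≤ 2m`):
`w_j = s_j s_{j+1} ⋯ s_{m-1} s_m s_{m-1} ⋯ s_1` for `1 ≤ j ≤ m−1` and
`w_{2m−k} = s_k s_{k-1} ⋯ s_1` for `0 ≤ k ≤ m`. -/
def wBfin (m j : ℕ) : Equiv.Perm ℕ :=
  if j < m then prodAsc (sB m) j m * prodDesc (sB m) 1 (m - 1)
  else prodDesc (sB m) 1 (2 * m - j)

/-!
Reading the defining words from the left gives `w_j = s_j w_{j+1}` for `j < m` and
`w_j = s_{2m-j} w_{j+1}` for `m ≤ j < 2m`, so downward induction from `w_{2m} = 1` yields a closed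
form for `w_j`. Membership in `W_B^m`, finality and the length are read off from it, and the
values `w_j(1)` are pairwise distinct. Conversely a final `w` is determined by `w(1)`: by induction
on `i`, `w(i)` for `2 ≤ i ≤ m` is the least admissible value not taken before, and the symmetry
`w(i) + w(2m+2-i) = 2m+2` fixes the rest. As `w(1) ≠ m+1` ranges over `2m` values, all attained
by the `w_j`, these are all the final elements.
-/

theorem prodDesc_succ (s : ℕ → Equiv.Perm ℕ) {a b : ℕ} (h : a ≤ b + 1) :
    prodDesc s a (b + 1) = s (b + 1) * prodDesc s a b := by
  rw [prodDesc, prodDesc, show b + 1 + 1 - a = (b + 1 - a) + 1 by omega, List.range'_1_concat,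
    show a + (b + 1 - a) = b + 1 by omega]
  simp

theorem prodDesc_of_lt (s : ℕ → Equiv.Perm ℕ) {a b : ℕ} (h : b < a) : prodDesc s a b = 1 := by
  simp [prodDesc, show b + 1 - a = 0 by omega]

theorem prodAsc_of_le (s : ℕ → Equiv.Perm ℕ) {a b : ℕ} (h : a ≤ b) :
    prodAsc s a b = s a * prodAsc s (a + 1) b := by
  rw [prodAsc, prodAsc, show b + 1 - a = (b - a) + 1 by omega, List.range'_succ]
  simp [show b + 1 - (a + 1) = b - a by omega]

theorem prodAsc_self (s : ℕ → Equiv.Perm ℕ) (a : ℕ) : prodAsc s a a = s a := by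
  simp [prodAsc]

theorem sB_self (m : ℕ) : sB m m = Equiv.swap m (m + 2) := if_pos rfl

theorem sB_of_ne {m i : ℕ} (h : i ≠ m) :
    sB m i = Equiv.swap i (i + 1) * Equiv.swap (2 * m + 1 - i) (2 * m + 2 - i) := if_neg h

theorem wBfin_two_mul (m : ℕ) : wBfin m (2 * m) = 1 := by
  rw [wBfin, if_neg (by omega), Nat.sub_self, prodDesc_of_lt _ Nat.zero_lt_one]

theorem wBfin_eq_sB_mul {m j : ℕ} (hj : j < 2 * m) :
    wBfin m j = sB m (if j < m then j else 2 * m - j) * wBfin m (j + 1) := by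
  unfold wBfin
  by_cases hjm : j + 1 < m
  · rw [if_pos (by omega), if_pos (by omega), if_pos hjm, prodAsc_of_le _ (by omega), mul_assoc]
  by_cases hj' : j + 1 = m
  · subst hj'
    rw [if_pos (by omega), if_pos (by omega), if_neg (by omega), prodAsc_of_le _ (by omega),
      prodAsc_self, show 2 * (j + 1) - (j + 1) = j + 1 by omega, prodDesc_succ _ (by omega),
      Nat.add_sub_cancel, mul_assoc]
  · rw [if_neg (by omega), if_neg (by omega), if_neg (by omega),
      show 2 * m - j = (2 * m - (j + 1)) + 1 by omega, prodDesc_succ _ (by omega)]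

/-- `w_j` in closed form: with `t = j` for `j ≤ m` and `t = 2m+1-j` for `j > m`, it maps
`{1, 2m+1}` onto `{t, 2m+2-t}`, shifts `2,…,t` down and `2m+2-t,…,2m` up by one. -/
def wBfinFun (m j x : ℕ) : ℕ :=
  if x = 0 then 0
  else if x = 1 then (if j ≤ m then 2 * m + 2 - j else 2 * m + 1 - j)
  else if x = 2 * m + 1 then (if j ≤ m then j else j + 1)
  else if x ≤ (if j ≤ m then j else 2 * m + 1 - j) then x - 1
  else if 2 * m + 2 - (if j ≤ m then j else 2 * m + 1 - j) ≤ x ∧ x ≤ 2 * m then x + 1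
  else x

theorem sB_wBfinFun_succ_of_lt {m j : ℕ} (hj1 : 1 ≤ j) (hjm : j < m) (x : ℕ) :
    sB m j (wBfinFun m (j + 1) x) = wBfinFun m j x := by
  rw [sB_of_ne hjm.ne, Equiv.Perm.mul_apply]
  unfold wBfinFun
  simp only [if_pos hjm.le, if_pos (show j + 1 ≤ m by omega), Equiv.swap_apply_def]
  split_ifs <;> first | contradiction | omega

theorem sB_wBfinFun_succ_self {m : ℕ} (hm : 1 ≤ m) (x : ℕ) :
    sB m m (wBfinFun m (m + 1) x) = wBfinFun m m x := by
  rw [sB_self]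
  unfold wBfinFun
  simp only [le_refl, if_true, if_neg (show ¬ m + 1 ≤ m by omega), Equiv.swap_apply_def]
  split_ifs <;> first | contradiction | omega

theorem sB_wBfinFun_succ_of_gt {m j : ℕ} (hjm : m < j) (hj2 : j < 2 * m) (x : ℕ) :
    sB m (2 * m - j) (wBfinFun m (j + 1) x) = wBfinFun m j x := by
  rw [sB_of_ne (by omega), Equiv.Perm.mul_apply, show 2 * m + 1 - (2 * m - j) = j + 1 by omega,
    show 2 * m + 2 - (2 * m - j) = j + 2 by omega]
  unfold wBfinFun
  simp only [if_neg (show ¬ j ≤ m by omega), if_neg (show ¬ j + 1 ≤ m by omega),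
    show 2 * m + 1 - (j + 1) = 2 * m - j by omega, Equiv.swap_apply_def]
  split_ifs <;> first | contradiction | omega

theorem wBfin_apply {m j : ℕ} (hj1 : 1 ≤ j) (hj2 : j ≤ 2 * m) (x : ℕ) :
    wBfin m j x = wBfinFun m j x := by
  induction hj2 using Nat.decreasingInduction with
  | self =>
    rw [wBfin_two_mul, Equiv.Perm.one_apply]
    unfold wBfinFun
    split_ifs <;> first | contradiction | omega
  | of_succ j hj ih =>
    rw [wBfin_eq_sB_mul hj, Equiv.Perm.mul_apply, ih (by omega)]
    rcases lt_trichotomy j m with hjm | rfl | hjm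
    · rw [if_pos hjm, sB_wBfinFun_succ_of_lt hj1 hjm]
    · rw [if_neg (lt_irrefl j), show 2 * j - j = j by omega, sB_wBfinFun_succ_self hj1]
    · rw [if_neg (by omega), sB_wBfinFun_succ_of_gt hjm hj]

theorem wBfin_apply_one {m j : ℕ} (hj1 : 1 ≤ j) (hj2 : j ≤ 2 * m) :
    wBfin m j 1 = if j ≤ m then 2 * m + 2 - j else 2 * m + 1 - j := by
  rw [wBfin_apply hj1 hj2]
  simp [wBfinFun]

theorem wBfin_injOn (m : ℕ) : Set.InjOn (wBfin m) (Set.Icc 1 (2 * m)) := by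
  rintro j ⟨hj1, hj2⟩ j' ⟨hj1', hj2'⟩ h
  have h1 := congrArg (· 1) h
  simp only [wBfin_apply_one hj1 hj2, wBfin_apply_one hj1' hj2'] at h1
  split_ifs at h1 <;> omega

theorem wBfin_mem_WB {m j : ℕ} (hj1 : 1 ≤ j) (hj2 : j ≤ 2 * m) : wBfin m j ∈ WB m := by
  refine ⟨?_, fun x hx => ?_, fun x hx1 hx2 => ?_⟩ <;>
  · simp only [wBfin_apply hj1 hj2, wBfinFun]
    split_ifs <;> first | contradiction | omega

theorem wBfin_finalB {m j : ℕ} (hj1 : 1 ≤ j) (hj2 : j ≤ 2 * m) : FinalB m (wBfin m j) := by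
  refine ⟨?_, fun i i' hi hii' hi' => ?_, fun b i hi hi' hb hb1 hb1' hbi => ?_⟩
  · rw [wBfin_apply_one hj1 hj2]
    split_ifs <;> omega
  · simp only [wBfin_apply hj1 hj2, wBfinFun]
    split_ifs <;> first | contradiction | omega
  · rw [wBfin_apply_one hj1 hj2] at hb1 hb1'
    simp only [wBfin_apply hj1 hj2] at hbi ⊢
    -- the values at `2, …, m` are `1, …, m` with `j` resp. `2m+1-j` left out
    have ht : ∃ t, 1 ≤ t ∧ t ≤ m ∧ (t = j ∨ t = 2 * m + 1 - j) ∧ b ≠ t := by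
      split_ifs at hb1 hb1' with hjm
      · exact ⟨j, hj1, hjm, Or.inl rfl, by omega⟩
      · exact ⟨2 * m + 1 - j, by omega, by omega, Or.inr rfl, hb1⟩
    obtain ⟨t, ht1, htm, htj, hbt⟩ := ht
    have hbm : b < m := by
      unfold wBfinFun at hbi
      split_ifs at hbi <;> omega
    rcases lt_or_gt_of_ne hbt with hbt | hbt
    · refine ⟨b + 1, by omega, by omega, ?_⟩
      unfold wBfinFun
      split_ifs <;> first | contradiction | omega
    · refine ⟨b, by omega, by omega, ?_⟩
      unfold wBfinFun
      split_ifs <;> first | contradiction | omega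

theorem lenB_wBfin_of_le {m j : ℕ} (hj1 : 1 ≤ j) (hjm : j ≤ m) :
    lenB m (wBfin m j) = 2 * m - j := by
  have hinv : (Finset.Icc 1 m ×ˢ Finset.Icc 1 m).filter
      (fun p => p.1 ≤ p.2 ∧ wBfin m j p.2 < wBfin m j p.1) = {1} ×ˢ Finset.Icc 2 m := by
    ext ⟨i, i'⟩
    simp only [Finset.mem_filter, Finset.mem_product, Finset.mem_Icc, Finset.mem_singleton,
      wBfin_apply hj1 (by omega : j ≤ 2 * m), wBfinFun]
    split_ifs <;> first | contradiction | omega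
  have hsum : (Finset.Icc 1 m ×ˢ Finset.Icc 1 m).filter
      (fun p => p.1 ≤ p.2 ∧ 2 * m + 2 < wBfin m j p.1 + wBfin m j p.2) =
      {1} ×ˢ insert 1 (Finset.Icc (j + 1) m) := by
    ext ⟨i, i'⟩
    simp only [Finset.mem_filter, Finset.mem_product, Finset.mem_Icc, Finset.mem_singleton,
      Finset.mem_insert, wBfin_apply hj1 (by omega : j ≤ 2 * m), wBfinFun]
    split_ifs <;> first | contradiction | omega
  rw [lenB, hinv, hsum, Finset.card_product, Finset.card_product,
    Finset.card_insert_of_notMem (by simp; omega), Finset.card_singleton, Nat.card_Icc,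
    Nat.card_Icc]
  omega

theorem lenB_wBfin_of_gt {m j : ℕ} (hjm : m < j) (hj2 : j ≤ 2 * m) :
    lenB m (wBfin m j) = 2 * m - j := by
  have hinv : (Finset.Icc 1 m ×ˢ Finset.Icc 1 m).filter
      (fun p => p.1 ≤ p.2 ∧ wBfin m j p.2 < wBfin m j p.1) =
      {1} ×ˢ Finset.Icc 2 (2 * m + 1 - j) := by
    ext ⟨i, i'⟩
    simp only [Finset.mem_filter, Finset.mem_product, Finset.mem_Icc, Finset.mem_singleton,
      wBfin_apply (by omega : 1 ≤ j) hj2, wBfinFun]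
    split_ifs <;> first | contradiction | omega
  have hsum : (Finset.Icc 1 m ×ˢ Finset.Icc 1 m).filter
      (fun p => p.1 ≤ p.2 ∧ 2 * m + 2 < wBfin m j p.1 + wBfin m j p.2) = ∅ := by
    ext ⟨i, i'⟩
    simp only [Finset.mem_filter, Finset.mem_product, Finset.mem_Icc, Finset.notMem_empty,
      iff_false, wBfin_apply (by omega : 1 ≤ j) hj2, wBfinFun]
    split_ifs <;> first | contradiction | omega
  rw [lenB, hinv, hsum, Finset.card_product, Finset.card_singleton, Finset.card_empty,
    Nat.card_Icc]
  omega

theorem lenB_wBfin {m j : ℕ} (hj1 : 1 ≤ j) (hj2 : j ≤ 2 * m) :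
    lenB m (wBfin m j) = 2 * m - j := by
  rcases le_or_gt j m with hjm | hjm
  · exact lenB_wBfin_of_le hj1 hjm
  · exact lenB_wBfin_of_gt hjm hj2

section WB

variable {m : ℕ} {w w' : Equiv.Perm ℕ}

theorem WB.one_le_apply (hw : w ∈ WB m) {x : ℕ} (hx : 1 ≤ x) : 1 ≤ w x := by
  by_contra h
  have h0 : w x = w 0 := by rw [hw.1]; omega
  exact absurd (w.injective h0) (by omega)

theorem WB.apply_one_add_apply (hw : w ∈ WB m) : w 1 + w (2 * m + 1) = 2 * m + 2 :=
  hw.2.2 1 le_rfl (by omega)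

theorem WB.ext (hw : w ∈ WB m) (hw' : w' ∈ WB m) (h : ∀ i, 1 ≤ i → i ≤ m → w i = w' i) :
    w = w' := by
  ext x
  rcases Nat.eq_zero_or_pos x with rfl | hx0
  · rw [hw.1, hw'.1]
  by_cases hxm : x ≤ m
  · exact h x hx0 hxm
  by_cases hx : 2 * m + 1 < x
  · rw [hw.2.1 x hx, hw'.2.1 x hx]
  have hs := hw.2.2 (2 * m + 2 - x) (by omega) (by omega)
  have hs' := hw'.2.2 (2 * m + 2 - x) (by omega) (by omega)
  rw [Nat.sub_sub_self (by omega)] at hs hs'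
  rcases eq_or_ne x (m + 1) with rfl | hxm1
  · rw [show 2 * m + 2 - (m + 1) = m + 1 by omega] at hs hs'
    omega
  · have := h (2 * m + 2 - x) (by omega) (by omega)
    omega

theorem FinalB.apply_le_apply (hf : FinalB m w) (hw' : w' ∈ WB m) (h1 : w 1 = w' 1) {i : ℕ}
    (hi : 2 ≤ i) (him : i ≤ m) (hlt : ∀ k, 2 ≤ k → k < i → w k = w' k) : w i ≤ w' i := by
  by_contra! hgt
  -- `w' i` is then an admissible value below `w i`, so `w` takes it at some `2 ≤ k ≤ m`
  have hb : 1 ≤ w' i := WB.one_le_apply hw' (by omega)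
  have hb1 : w' i ≠ w 1 := fun h => by rw [h1] at h; exact absurd (w'.injective h) (by omega)
  have hb1' : w' i ≠ 2 * m + 2 - w 1 := fun h => by
    rw [h1, ← WB.apply_one_add_apply hw', Nat.add_sub_cancel_left] at h
    exact absurd (w'.injective h) (by omega)
  obtain ⟨k, hk, hkm, hwk⟩ := hf.2.2 _ i hi him hb hb1 hb1' hgt
  rcases lt_trichotomy k i with hki | rfl | hki
  · rw [hlt k hk hki] at hwk
    exact absurd (w'.injective hwk) hki.ne
  · omega
  · have := hf.2.1 i k hi hki hkm
    omega

theorem FinalB.eq_of_apply_one_eq (hw : w ∈ WB m) (hw' : w' ∈ WB m) (hf : FinalB m w)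
    (hf' : FinalB m w') (h1 : w 1 = w' 1) : w = w' := by
  have hlow : ∀ i, 2 ≤ i → i ≤ m → w i = w' i := by
    intro i
    induction i using Nat.strong_induction_on with
    | _ i ih =>
      intro hi him
      have hlt : ∀ k, 2 ≤ k → k < i → w k = w' k := fun k hk hki => ih k hki hk (by omega)
      exact le_antisymm (FinalB.apply_le_apply hf hw' h1 hi him hlt)
        (FinalB.apply_le_apply hf' hw h1.symm hi him fun k hk hki => (hlt k hk hki).symm)
  refine WB.ext hw hw' fun i hi him => ?_
  rcases eq_or_ne i 1 with rfl | hi1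
  · exact h1
  · exact hlow i (by omega) him

end WB

theorem exists_wBfin_eq {m : ℕ} {w : Equiv.Perm ℕ} (hw : w ∈ WB m) (hf : FinalB m w) :
    ∃ j, 1 ≤ j ∧ j ≤ 2 * m ∧ wBfin m j = w := by
  have ha := WB.apply_one_add_apply hw
  have ha1 := WB.one_le_apply hw le_rfl
  have ha2 := WB.one_le_apply hw (show 1 ≤ 2 * m + 1 by omega)
  have hne := hf.1
  obtain ⟨j, hj1, hj2, hj⟩ : ∃ j, 1 ≤ j ∧ j ≤ 2 * m ∧ wBfin m j 1 = w 1 := by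
    rcases le_or_gt (w 1) m with hw1 | hw1
    · refine ⟨2 * m + 1 - w 1, by omega, by omega, ?_⟩
      rw [wBfin_apply_one (by omega) (by omega), if_neg (by omega)]
      omega
    · refine ⟨2 * m + 2 - w 1, by omega, by omega, ?_⟩
      rw [wBfin_apply_one (by omega) (by omega), if_pos (by omega)]
      omega
  exact ⟨j, hj1, hj2,
    FinalB.eq_of_apply_one_eq (wBfin_mem_WB hj1 hj2) hw (wBfin_finalB hj1 hj2) hf hj⟩

theorem stmt4_general (m : ℕ) :
    (∀ j j', 1 ≤ j → j ≤ 2 * m → 1 ≤ j' → j' ≤ 2 * m → wBfin m j = wBfin m j' → j = j') ∧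
    (∀ j, 1 ≤ j → j ≤ 2 * m →
      wBfin m j ∈ WB m ∧ FinalB m (wBfin m j) ∧ lenB m (wBfin m j) = 2 * m - j) ∧
    (∀ w ∈ WB m, FinalB m w → ∃ j, 1 ≤ j ∧ j ≤ 2 * m ∧ wBfin m j = w) :=
  ⟨fun _ _ hj1 hj2 hj1' hj2' => wBfin_injOn m ⟨hj1, hj2⟩ ⟨hj1', hj2'⟩,
    fun _ hj1 hj2 => ⟨wBfin_mem_WB hj1 hj2, wBfin_finalB hj1 hj2, lenB_wBfin hj1 hj2⟩,
    fun _ hw hf => exists_wBfin_eq hw hf⟩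

/-- The `2m` products `w_j` are pairwise distinct reduced words (`ℓ(w_j) = 2m − j`)
and are exactly the final elements of `W_B^m`. -/
theorem stmt4 (m : ℕ) (hm : 1 ≤ m) :
    (∀ j j', 1 ≤ j → j ≤ 2 * m → 1 ≤ j' → j' ≤ 2 * m → wBfin m j = wBfin m j' → j = j') ∧
    (∀ j, 1 ≤ j → j ≤ 2 * m →
      wBfin m j ∈ WB m ∧ FinalB m (wBfin m j) ∧ lenB m (wBfin m j) = 2 * m - j) ∧
    (∀ w ∈ WB m, FinalB m w → ∃ j, 1 ≤ j ∧ j ≤ 2 * m ∧ wBfin m j = w) :=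
  stmt4_general m
end

section
/- Let m ≥ 1. For every w ∈ W_B^m there exists a shuffle sequence starting with w which is ambiguous, final, or cyclic. -/
/-- `v` is an elementary shuffle of `u` by `s_i` (in `W_B^m`): `1 < i ≤ m`,
`ℓ(u s_i) = ℓ(u) − 1`, `ℓ(s_i u s_i) = ℓ(u)` and `v = s_i u s_i`. -/
def ElemShuffleB (m i : ℕ) (u v : Equiv.Perm ℕ) : Prop :=
  1 < i ∧ i ≤ m ∧ lenB m (u * sB m i) + 1 = lenB m u ∧
    lenB m (sB m i * u * sB m i) = lenB m u ∧ v = sB m i * u * sB m i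

/-- `u 1, …, u r` is a shuffle sequence in `W_B^m`. -/
def IsShuffleSeqB (m r : ℕ) (u : ℕ → Equiv.Perm ℕ) : Prop :=
  1 ≤ r ∧ ∀ k, 1 ≤ k → k < r → ∃ i, ElemShuffleB m i (u k) (u (k + 1))

/-- The shuffle sequence `u 1, …, u r` is ambiguous: for some `1 < i ≤ m` one has
`ℓ(u_r s_i) = ℓ(u_r) − 1` and `ℓ(s_i u_r s_i) = ℓ(u_r) − 2`. -/
def SeqAmbiguousB (m r : ℕ) (u : ℕ → Equiv.Perm ℕ) : Prop :=
  ∃ i, 1 < i ∧ i ≤ m ∧ lenB m (u r * sB m i) + 1 = lenB m (u r) ∧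
    lenB m (sB m i * u r * sB m i) + 2 = lenB m (u r)

/-- The sequence `u 1, …, u r` is cyclic: `u j = u k` for some `1 ≤ j < k ≤ r`. -/
def SeqCyclic (r : ℕ) (u : ℕ → Equiv.Perm ℕ) : Prop :=
  ∃ j k, 1 ≤ j ∧ j < k ∧ k ≤ r ∧ u j = u k

/-- `w` is one of the `2m` final elements of `W_B^m`. -/
def IsFinalEltB (m : ℕ) (w : Equiv.Perm ℕ) : Prop :=
  (∃ k, 1 ≤ k ∧ k ≤ m - 1 ∧ w = prodAsc (sB m) k m * prodDesc (sB m) 1 (m - 1)) ∨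
  (∃ k, k ≤ m ∧ w = prodDesc (sB m) 1 k)

/-- `w` is degenerate: some shuffle sequence starting with `w` is ambiguous or cyclic. -/
def DegenerateB (m : ℕ) (w : Equiv.Perm ℕ) : Prop :=
  ∃ r u, IsShuffleSeqB m r u ∧ u 1 = w ∧ (SeqAmbiguousB m r u ∨ SeqCyclic r u)

/-- `w` is of final shuffle type: some shuffle sequence starting with `w` is final. -/
def FinalShuffleTypeB (m : ℕ) (w : Equiv.Perm ℕ) : Prop :=
  ∃ r u, IsShuffleSeqB m r u ∧ u 1 = w ∧ IsFinalEltB m (u r)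

/-!
Apply elementary shuffles for as long as possible. As `W_B^m` is finite, this either revisits
an element, giving a cyclic sequence, or stops at some `v` admitting no elementary shuffle.
Left or right multiplication by a simple reflection changes the length by exactly one, which is
seen by writing `ℓ` as a sum of local terms over pairs of positions and tracking the one or two
pairs whose term changes. So if `ℓ(v s_i) = ℓ(v) − 1` for some `1 < i ≤ m`, then
`ℓ(s_i v s_i) = ℓ(v s_i) ± 1` must be `ℓ(v) − 2` (the sequence is ambiguous), since `ℓ(v)` would
make `s_i v s_i` an elementary shuffle of `v`. Otherwise `v(2) < ⋯ < v(m) < m + 1`, which forces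
`v(j) ∈ {j − 1, j}` with a single switch at the `k ≤ m` with `v(1) ∈ {k, 2m + 2 − k}`; these are
exactly the final elements.
-/

open Equiv Finset

theorem exists_chain_stuck_or_cyclic {α : Type*} {S : Set α} (hS : S.Finite)
    {R : α → α → Prop} (hRS : ∀ u v, u ∈ S → R u v → v ∈ S) {w : α} (hw : w ∈ S) :
    ∃ (r : ℕ) (u : ℕ → α), 1 ≤ r ∧ (∀ k, 1 ≤ k → k < r → R (u k) (u (k + 1))) ∧ u 1 = w ∧
      ((u r ∈ S ∧ ∀ v, ¬ R (u r) v) ∨ ∃ j k, 1 ≤ j ∧ j < k ∧ k ≤ r ∧ u j = u k) := by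
  classical
  obtain ⟨next, hnext⟩ : ∃ next : α → α, ∀ u, (∃ v, R u v) → R u (next u) :=
    ⟨fun u => if h : ∃ v, R u v then h.choose else u, fun u h => by
      simpa only [dif_pos h] using h.choose_spec⟩
  set x : ℕ → α := fun n => next^[n] w
  have hx_succ (n : ℕ) : x (n + 1) = next (x n) := Function.iterate_succ_apply' next n w
  -- the chain `x 0, x 1, …, x N`, reindexed to start at `1`
  have hchain (N : ℕ) (hN : ∀ n < N, ∃ v, R (x n) v) :
      (∀ k, 1 ≤ k → k < N + 1 → R (x (k - 1)) (x (k + 1 - 1))) ∧ ∀ n ≤ N, x n ∈ S := by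
    have hstep (n : ℕ) (hn : n < N) : R (x n) (x (n + 1)) := hx_succ n ▸ hnext _ (hN n hn)
    refine ⟨fun k hk hkN => ?_, fun n hn => ?_⟩
    · obtain ⟨n, rfl⟩ := Nat.exists_eq_add_of_le' hk
      simpa using hstep n (by omega)
    · induction n with
      | zero => exact hw
      | succ n ih => exact hRS _ _ (ih (by omega)) (hstep n (by omega))
  by_cases hstuck : ∃ n, ∀ v, ¬ R (x n) v
  · have hmin (n : ℕ) (hn : n < Nat.find hstuck) : ∃ v, R (x n) v := by
      simpa using Nat.find_min hstuck hn
    obtain ⟨hR, hmem⟩ := hchain _ hmin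
    refine ⟨Nat.find hstuck + 1, fun k => x (k - 1), by omega, hR, rfl, Or.inl ?_⟩
    simpa using ⟨hmem _ le_rfl, Nat.find_spec hstuck⟩
  · push Not at hstuck
    have hmem (n : ℕ) : x n ∈ S := (hchain n fun k _ => hstuck k).2 n le_rfl
    obtain ⟨a, b, hab, heq⟩ := Set.Finite.exists_lt_map_eq_of_forall_mem hmem hS
    refine ⟨b + 1, fun k => x (k - 1), by omega, (hchain b fun k _ => hstuck k).1, rfl,
      Or.inr ⟨a + 1, b + 1, by omega, by omega, le_rfl, by simpa using heq⟩⟩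

namespace WB

variable {m : ℕ} {σ τ : Perm ℕ}

theorem one_mem (m : ℕ) : (1 : Perm ℕ) ∈ WB m :=
  ⟨rfl, fun _ _ => rfl, fun i _ _ => by simp only [Perm.one_apply]; omega⟩

theorem apply_bounds (hσ : σ ∈ WB m) {i : ℕ} (h1 : 1 ≤ i) (h2 : i ≤ 2 * m + 1) :
    1 ≤ σ i ∧ σ i ≤ 2 * m + 1 := by
  constructor
  · by_contra! h
    have := σ.injective ((Nat.lt_one_iff.1 h).trans hσ.1.symm)
    omega
  · by_contra! h
    have := σ.injective (hσ.2.1 _ h)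
    omega

theorem apply_reflect (hσ : σ ∈ WB m) {i : ℕ} (h1 : 1 ≤ i) (h2 : i ≤ 2 * m + 1) :
    σ (2 * m + 2 - i) = 2 * m + 2 - σ i := by
  have := hσ.2.2 i h1 h2
  omega

theorem apply_mid (hσ : σ ∈ WB m) : σ (m + 1) = m + 1 := by
  have := apply_reflect hσ (i := m + 1) (by omega) (by omega)
  rw [show 2 * m + 2 - (m + 1) = m + 1 by omega] at this
  omega

theorem apply_ne_mid (hσ : σ ∈ WB m) {k : ℕ} (hk : k ≠ m + 1) :
    σ k ≠ m + 1 :=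
  fun h => hk (σ.injective (h.trans (apply_mid hσ).symm))

theorem mul_mem (hσ : σ ∈ WB m) (hτ : τ ∈ WB m) : σ * τ ∈ WB m := by
  refine ⟨by simp [hτ.1, hσ.1], fun i hi => by simp [hτ.2.1 i hi, hσ.2.1 i hi],
    fun i h1 h2 => ?_⟩
  obtain ⟨hτ1, hτ2⟩ := apply_bounds hτ h1 h2
  simp only [Perm.mul_apply, apply_reflect hτ h1 h2]
  exact hσ.2.2 _ hτ1 hτ2

theorem ext_of_eqOn (hσ : σ ∈ WB m) (hτ : τ ∈ WB m)
    (h : ∀ j, 1 ≤ j → j ≤ m → σ j = τ j) : σ = τ := by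
  ext j
  rcases Nat.eq_zero_or_pos j with rfl | h1
  · rw [hσ.1, hτ.1]
  rcases le_or_gt j m with hjm | hjm
  · exact h j h1 hjm
  rcases eq_or_lt_of_le (show m + 1 ≤ j by omega) with rfl | hj
  · rw [apply_mid hσ, apply_mid hτ]
  rcases le_or_gt j (2 * m + 1) with hj' | hj'
  · have hσ' := apply_reflect hσ (i := 2 * m + 2 - j) (by omega) (by omega)
    have hτ' := apply_reflect hτ (i := 2 * m + 2 - j) (by omega) (by omega)
    rw [show 2 * m + 2 - (2 * m + 2 - j) = j by omega] at hσ' hτ'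
    rw [hσ', hτ', h _ (by omega) (by omega)]
  · rw [hσ.2.1 _ hj', hτ.2.1 _ hj']

-- `v k = t ∨ v k + t = 2m + 2` says `|v k| = t` when a value `a ≥ m + 2` is read as
-- the signed value `-(2m + 2 - a)`
theorem exists_abs_preimage {v : Perm ℕ} (hv : v ∈ WB m) {t : ℕ} (ht1 : 1 ≤ t)
    (ht2 : t ≤ m) : ∃ A, 1 ≤ A ∧ A ≤ m ∧
      ∀ k, 1 ≤ k → k ≤ m → ((v k = t ∨ v k + t = 2 * m + 2) ↔ k = A) := by
  set α := v.symm t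
  have hvα : v α = t := v.apply_symm_apply t
  have hα1 : 1 ≤ α := Nat.one_le_iff_ne_zero.2 fun h => by rw [h, hv.1] at hvα; omega
  have hα2 : α ≤ 2 * m + 1 := by
    by_contra! h
    rw [hv.2.1 α h] at hvα
    omega
  have hαm : α ≠ m + 1 := fun h => by rw [h, apply_mid hv] at hvα; omega
  refine ⟨if α ≤ m then α else 2 * m + 2 - α, by split_ifs <;> omega,
    by split_ifs <;> omega, fun k hk1 hk2 => ?_⟩
  have hrefl := apply_reflect hv hk1 (by omega : k ≤ 2 * m + 1)
  have hk : v k = t ↔ k = α := v.eq_symm_apply.symm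
  have hk' : v (2 * m + 2 - k) = t ↔ 2 * m + 2 - k = α :=
    v.eq_symm_apply.symm
  have := (apply_bounds hv hk1 (by omega : k ≤ 2 * m + 1)).2
  split_ifs <;> omega

theorem finite (m : ℕ) : (WB m).Finite := by
  refine Set.Finite.of_finite_image (f := fun (σ : Perm ℕ) (x : Fin (2 * m + 2)) => σ x)
    ((Set.Finite.pi fun _ => Set.finite_Iic (2 * m + 1)).subset ?_) fun σ hσ τ hτ h =>
      ext_of_eqOn hσ hτ fun j _ hj => congrFun h ⟨j, by omega⟩
  rintro f ⟨σ, hσ, rfl⟩ x -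
  rcases Nat.eq_zero_or_pos (x : ℕ) with h0 | h1
  · simp [h0, hσ.1]
  · exact Set.mem_Iic.2 (apply_bounds hσ h1 (by omega)).2

end WB

theorem sB_apply_of_lt {m i : ℕ} (hi : i < m) (j : ℕ) :
    sB m i j = if j = i then i + 1 else if j = i + 1 then i
      else if j = 2 * m + 1 - i then 2 * m + 2 - i
      else if j = 2 * m + 2 - i then 2 * m + 1 - i else j := by
  rw [sB, if_neg hi.ne, Perm.mul_apply, swap_apply_def, swap_apply_def]
  split_ifs <;> omega

theorem sB_self_apply (m j : ℕ) :
    sB m m j = if j = m then m + 2 else if j = m + 2 then m else j := by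
  rw [sB, if_pos rfl, swap_apply_def]

theorem sB_mem {m i : ℕ} (h1 : 1 ≤ i) (h2 : i ≤ m) : sB m i ∈ WB m := by
  rcases eq_or_lt_of_le h2 with rfl | hi
  · refine ⟨?_, fun j hj => ?_, fun j _ _ => ?_⟩ <;> simp only [sB_self_apply] <;>
      split_ifs <;> first | contradiction | omega
  · refine ⟨?_, fun j hj => ?_, fun j _ _ => ?_⟩ <;> simp only [sB_apply_of_lt hi] <;>
      split_ifs <;> first | contradiction | omega

def lenBTerm (m : ℕ) (w : Perm ℕ) (p : ℕ × ℕ) : ℕ :=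
  (if p.1 ≤ p.2 ∧ w p.2 < w p.1 then 1 else 0) +
    (if p.1 ≤ p.2 ∧ 2 * m + 2 < w p.1 + w p.2 then 1 else 0)

theorem lenB_eq_sum (m : ℕ) (w : Perm ℕ) :
    lenB m w = ∑ p ∈ Icc 1 m ×ˢ Icc 1 m, lenBTerm m w p := by
  rw [lenB, card_filter, card_filter, ← sum_add_distrib]
  rfl

theorem lenB_add_sum_eq_of_forall_notMem {m : ℕ} {v w : Perm ℕ} {T : Finset (ℕ × ℕ)}
    (hT : T ⊆ Icc 1 m ×ˢ Icc 1 m)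
    (h : ∀ p ∈ Icc 1 m ×ˢ Icc 1 m, p ∉ T → lenBTerm m v p = lenBTerm m w p) :
    lenB m v + ∑ p ∈ T, lenBTerm m w p = lenB m w + ∑ p ∈ T, lenBTerm m v p := by
  rw [lenB_eq_sum, lenB_eq_sum, ← sum_sdiff hT, ← sum_sdiff hT (f := lenBTerm m w),
    sum_congr rfl fun p hp => h p (mem_sdiff.1 hp).1 (mem_sdiff.1 hp).2]
  ring

theorem lenBTerm_of_apply {m x y a b : ℕ} {w : Perm ℕ} (hx : w x = a) (hy : w y = b) :
    lenBTerm m w (x, y) =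
      (if x ≤ y ∧ b < a then 1 else 0) + (if x ≤ y ∧ 2 * m + 2 < a + b then 1 else 0) := by
  subst hx hy
  rfl

theorem lenBTerm_eq_zero_of_lt {m x y : ℕ} {w : Perm ℕ} (h : y < x) : lenBTerm m w (x, y) = 0 := by
  simp [lenBTerm, not_le.2 h]

theorem mul_sB_self_apply_self {m : ℕ} {w : Perm ℕ} (hw : w ∈ WB m) (hm : 1 ≤ m) :
    (w * sB m m) m = 2 * m + 2 - w m := by
  rw [Perm.mul_apply, sB_self_apply, if_pos rfl, ← WB.apply_reflect hw hm (by omega)]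
  congr 1
  omega

theorem mul_sB_self_apply_of_lt {m j : ℕ} (w : Perm ℕ) (hj : j < m) :
    (w * sB m m) j = w j := by
  rw [Perm.mul_apply, sB_self_apply, if_neg hj.ne, if_neg (by omega)]

theorem lenB_mul_sB_self_add_one {m : ℕ} (hm : 1 ≤ m) {w : Perm ℕ} (hw : w ∈ WB m)
    (hd : m + 1 < w m) : lenB m (w * sB m m) + 1 = lenB m w := by
  have hwm := (WB.apply_bounds hw hm (by omega)).2
  have key := lenB_add_sum_eq_of_forall_notMem (m := m) (v := w * sB m m) (w := w)
    (T := {(m, m)})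
    (by simpa using hm) ?_
  · simp only [sum_singleton, lenBTerm, mul_sB_self_apply_self hw hm] at key
    split_ifs at key <;> omega
  · rintro ⟨x, y⟩ hp hne
    simp only [mem_product, mem_Icc, mem_singleton, Prod.mk.injEq] at hp hne
    rcases hp.1.2.eq_or_lt with rfl | hx <;> rcases hp.2.2.eq_or_lt with rfl | hy
    · exact absurd ⟨rfl, rfl⟩ hne
    · simp only [lenBTerm]
      split_ifs <;> omega
    · simp only [lenBTerm, mul_sB_self_apply_self hw hm, mul_sB_self_apply_of_lt w hx]
      split_ifs <;> omega
    · simp only [lenBTerm, mul_sB_self_apply_of_lt w hx, mul_sB_self_apply_of_lt w hy]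

theorem lenB_mul_sB_add_one_of_lt {m i : ℕ} (hi1 : 1 ≤ i) (hi : i < m) {w : Perm ℕ}
    (hd : w (i + 1) < w i) : lenB m (w * sB m i) + 1 = lenB m w := by
  set τ := swap i (i + 1)
  have hτ {j : ℕ} (hj : j ≤ m) : (w * sB m i) j = w (τ j) := by
    rw [Perm.mul_apply, sB_apply_of_lt hi, swap_apply_def]
    congr 1
    split_ifs <;> omega
  set T : Finset (ℕ × ℕ) := {(i, i + 1), (i + 1, i)}
  have hT : T ⊆ Icc 1 m ×ˢ Icc 1 m := by
    intro p hp
    simp only [T, mem_insert, mem_singleton] at hp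
    rcases hp with rfl | rfl <;> simp only [mem_product, mem_Icc] <;> omega
  have hτT : ∀ p ∈ (Icc 1 m ×ˢ Icc 1 m) \ T, (τ p.1, τ p.2) ∈ (Icc 1 m ×ˢ Icc 1 m) \ T := by
    rintro ⟨x, y⟩ hp
    simp only [T, mem_sdiff, mem_product, mem_Icc, mem_insert, mem_singleton,
      Prod.mk.injEq] at hp ⊢
    simp only [τ, swap_apply_def]
    split_ifs <;> omega
  -- off `T`, the reindexing `τ × τ` preserves the order of the two positions
  have hrest : ∑ p ∈ (Icc 1 m ×ˢ Icc 1 m) \ T, lenBTerm m (w * sB m i) p =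
      ∑ p ∈ (Icc 1 m ×ˢ Icc 1 m) \ T, lenBTerm m w p := by
    refine sum_nbij' (fun p => (τ p.1, τ p.2)) (fun p => (τ p.1, τ p.2)) hτT hτT
      (fun p _ => by simp [τ]) (fun p _ => by simp [τ]) ?_
    rintro ⟨x, y⟩ hp
    simp only [T, mem_sdiff, mem_product, mem_Icc, mem_insert, mem_singleton,
      Prod.mk.injEq] at hp
    have hle : τ x ≤ τ y ↔ x ≤ y := by
      simp only [τ, swap_apply_def]
      split_ifs <;> omega
    simp only [lenBTerm, hτ hp.1.1.2, hτ hp.1.2.2, hle]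
  rw [lenB_eq_sum, lenB_eq_sum, ← sum_sdiff hT, ← sum_sdiff hT (f := lenBTerm m w), hrest,
    sum_pair (by simp), sum_pair (by simp)]
  simp only [lenBTerm, hτ hi.le, hτ (show i + 1 ≤ m by omega), τ, swap_apply_left,
    swap_apply_right]
  split_ifs <;> omega

theorem sB_apply_lt_and_add_lt_iff_of_lt {m i a b : ℕ} (hi : i < m)
    (hab : ¬ ((a = i ∨ a + i = 2 * m + 2) ∧ (b = i + 1 ∨ b + i + 1 = 2 * m + 2)))
    (hba : ¬ ((b = i ∨ b + i = 2 * m + 2) ∧ (a = i + 1 ∨ a + i + 1 = 2 * m + 2))) :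
    (sB m i b < sB m i a ↔ b < a) ∧
      (2 * m + 2 < sB m i a + sB m i b ↔ 2 * m + 2 < a + b) := by
  simp only [sB_apply_of_lt hi]
  constructor <;> split_ifs <;> omega

theorem sB_self_apply_lt_and_add_lt_iff {m a b : ℕ} (ha : a ≠ m + 1) (hb : b ≠ m + 1)
    (hab : ¬ ((a = m ∨ a + m = 2 * m + 2) ∧ (b = m ∨ b + m = 2 * m + 2))) :
    (sB m m b < sB m m a ↔ b < a) ∧
      (2 * m + 2 < sB m m a + sB m m b ↔ 2 * m + 2 < a + b) := by
  simp only [sB_self_apply]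
  constructor <;> split_ifs <;> omega

theorem lenB_sB_self_mul {m : ℕ} (hm : 1 ≤ m) {v : Perm ℕ} (hv : v ∈ WB m) :
    lenB m (sB m m * v) + 1 = lenB m v ∨ lenB m (sB m m * v) = lenB m v + 1 := by
  obtain ⟨A, hA1, hAm, hA⟩ := WB.exists_abs_preimage hv hm le_rfl
  have key := lenB_add_sum_eq_of_forall_notMem (m := m) (v := sB m m * v) (w := v)
    (T := {(A, A)})
    (by simpa using ⟨hA1, hAm⟩) ?_
  · have hsA : (v A = m ∧ (sB m m * v) A = m + 2) ∨ (v A = m + 2 ∧ (sB m m * v) A = m) := by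
      have := (hA A hA1 hAm).2 rfl
      rw [Perm.mul_apply, sB_self_apply]; split_ifs <;> omega
    rw [sum_singleton, sum_singleton] at key
    rcases hsA with ⟨hA', hsA⟩ | ⟨hA', hsA⟩ <;>
      rw [lenBTerm_of_apply hsA hsA, lenBTerm_of_apply hA' hA'] at key <;>
      split_ifs at key <;> omega
  · rintro ⟨x, y⟩ hp hne
    simp only [mem_product, mem_Icc, mem_singleton, Prod.mk.injEq] at hp hne
    obtain ⟨hlt, hsum⟩ := sB_self_apply_lt_and_add_lt_iff
      (WB.apply_ne_mid hv (by omega : x ≠ m + 1)) (WB.apply_ne_mid hv (by omega : y ≠ m + 1))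
      fun ⟨hx, hy⟩ => hne ⟨(hA x hp.1.1 hp.1.2).1 hx, (hA y hp.2.1 hp.2.2).1 hy⟩
    simp only [lenBTerm, Perm.mul_apply, hlt, hsum]

theorem lenB_sB_mul_of_lt {m i : ℕ} (hi1 : 1 ≤ i) (hi : i < m) {v : Perm ℕ}
    (hv : v ∈ WB m) :
    lenB m (sB m i * v) + 1 = lenB m v ∨ lenB m (sB m i * v) = lenB m v + 1 := by
  obtain ⟨A, hA1, hAm, hA⟩ := WB.exists_abs_preimage hv hi1 hi.le
  obtain ⟨B, hB1, hBm, hB⟩ := WB.exists_abs_preimage hv (t := i + 1) (by omega) hi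
  have hvA := (hA A hA1 hAm).2 rfl
  have hvB := (hB B hB1 hBm).2 rfl
  have hAB : A ≠ B := by rintro rfl; omega
  have key := lenB_add_sum_eq_of_forall_notMem (m := m) (v := sB m i * v) (w := v)
    (T := {(A, B), (B, A)})
    (by simp only [insert_subset_iff, singleton_subset_iff, mem_product, mem_Icc]; omega) ?_
  · rw [sum_pair (by simp [hAB]), sum_pair (by simp [hAB])] at key
    have hsA : (v A = i ∧ (sB m i * v) A = i + 1) ∨
        (v A = 2 * m + 2 - i ∧ (sB m i * v) A = 2 * m + 1 - i) := by
      rw [Perm.mul_apply, sB_apply_of_lt hi]; split_ifs <;> omega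
    have hsB : (v B = i + 1 ∧ (sB m i * v) B = i) ∨
        (v B = 2 * m + 1 - i ∧ (sB m i * v) B = 2 * m + 2 - i) := by
      rw [Perm.mul_apply, sB_apply_of_lt hi]; split_ifs <;> omega
    rcases lt_or_gt_of_ne hAB with h | h
    · rw [lenBTerm_eq_zero_of_lt h, lenBTerm_eq_zero_of_lt h] at key
      rcases hsA with ⟨hA', hsA⟩ | ⟨hA', hsA⟩ <;> rcases hsB with ⟨hB', hsB⟩ | ⟨hB', hsB⟩ <;>
        rw [lenBTerm_of_apply hsA hsB, lenBTerm_of_apply hA' hB'] at key <;>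
        simp only [h.le, true_and] at key <;> split_ifs at key <;> omega
    · rw [lenBTerm_eq_zero_of_lt h, lenBTerm_eq_zero_of_lt h] at key
      rcases hsA with ⟨hA', hsA⟩ | ⟨hA', hsA⟩ <;> rcases hsB with ⟨hB', hsB⟩ | ⟨hB', hsB⟩ <;>
        rw [lenBTerm_of_apply hsB hsA, lenBTerm_of_apply hB' hA'] at key <;>
        simp only [h.le, true_and] at key <;> split_ifs at key <;> omega
  · rintro ⟨x, y⟩ hp hne
    simp only [mem_product, mem_Icc, mem_insert, mem_singleton, Prod.mk.injEq] at hp hne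
    obtain ⟨hlt, hsum⟩ := sB_apply_lt_and_add_lt_iff_of_lt (a := v x) (b := v y) hi
      (fun ⟨hx, hy⟩ => hne (Or.inl ⟨(hA x hp.1.1 hp.1.2).1 hx, (hB y hp.2.1 hp.2.2).1 hy⟩))
      (fun ⟨hy, hx⟩ => hne (Or.inr ⟨(hB x hp.1.1 hp.1.2).1 hx, (hA y hp.2.1 hp.2.2).1 hy⟩))
    simp only [lenBTerm, Perm.mul_apply, hlt, hsum]

theorem lenB_sB_mul {m i : ℕ} (hi1 : 1 ≤ i) (hi : i ≤ m) {v : Perm ℕ} (hv : v ∈ WB m) :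
    lenB m (sB m i * v) + 1 = lenB m v ∨ lenB m (sB m i * v) = lenB m v + 1 := by
  rcases hi.eq_or_lt with rfl | hi
  · exact lenB_sB_self_mul hi1 hv
  · exact lenB_sB_mul_of_lt hi1 hi hv

theorem prodDesc_one_zero (s : ℕ → Perm ℕ) : prodDesc s 1 0 = 1 := by
  simp [prodDesc]

theorem prodDesc_one_succ (s : ℕ → Perm ℕ) (k : ℕ) :
    prodDesc s 1 (k + 1) = s (k + 1) * prodDesc s 1 k := by
  rw [prodDesc, prodDesc, show k + 1 + 1 - 1 = k + 1 from rfl, List.range'_concat]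
  simp [Nat.add_comm]

theorem prodAsc_eq_mul (s : ℕ → Perm ℕ) {k b : ℕ} (h : k ≤ b) :
    prodAsc s k b = s k * prodAsc s (k + 1) b := by
  rw [prodAsc, prodAsc, show b + 1 - k = b - k + 1 by omega, List.range'_succ,
    show b + 1 - (k + 1) = b - k by omega]
  simp

theorem prodAsc_of_lt (s : ℕ → Perm ℕ) {k b : ℕ} (h : b < k) : prodAsc s k b = 1 := by
  simp [prodAsc, show b + 1 - k = 0 by omega]

theorem prodDesc_mem {m k : ℕ} (hk : k ≤ m) : prodDesc (sB m) 1 k ∈ WB m := by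
  induction k with
  | zero => simpa [prodDesc_one_zero] using WB.one_mem m
  | succ k ih => rw [prodDesc_one_succ]; exact WB.mul_mem (sB_mem (by omega) hk) (ih (by omega))

theorem prodAsc_mem {m k : ℕ} (hk : 1 ≤ k) : prodAsc (sB m) k m ∈ WB m := by
  induction h : m + 1 - k generalizing k with
  | zero => rw [prodAsc_of_lt _ (by omega)]; exact WB.one_mem m
  | succ d ih =>
    rw [prodAsc_eq_mul _ (by omega)]
    exact WB.mul_mem (sB_mem hk (by omega)) (ih (by omega) (by omega))

theorem prodDesc_apply {m k j : ℕ} (hk : k < m) (hj : j ≤ m) :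
    prodDesc (sB m) 1 k j = if j = 1 then k + 1 else if j ≤ k + 1 then j - 1 else j := by
  induction k with
  | zero => simp only [prodDesc_one_zero, Perm.one_apply]; split_ifs <;> omega
  | succ k ih =>
    rw [prodDesc_one_succ, Perm.mul_apply, ih (by omega), sB_apply_of_lt hk]
    split_ifs <;> omega

theorem prodDesc_self_apply {m j : ℕ} (hm : 1 ≤ m) (hj : j ≤ m) :
    prodDesc (sB m) 1 m j = if j = 1 then m + 2 else j - 1 := by
  obtain ⟨k, rfl⟩ := Nat.exists_eq_add_of_le' hm
  rw [prodDesc_one_succ, Perm.mul_apply, prodDesc_apply (by omega) hj, sB_self_apply]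
  split_ifs <;> omega

theorem prodAsc_apply {m k x : ℕ} (hk : 1 ≤ k) (hx : x ≤ m) :
    prodAsc (sB m) k m x = if x < k then x else if x < m then x + 1 else 2 * m + 2 - k := by
  induction h : m + 1 - k generalizing k with
  | zero => rw [prodAsc_of_lt _ (by omega)]; simp only [Perm.one_apply]; split_ifs <;> omega
  | succ d ih =>
    rw [prodAsc_eq_mul _ (by omega), Perm.mul_apply, ih (by omega) (by omega)]
    rcases (show k ≤ m by omega).eq_or_lt with rfl | hkm
    · simp only [sB_self_apply]; split_ifs <;> omega
    · simp only [sB_apply_of_lt hkm]; split_ifs <;> omega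

theorem isFinalEltB_of_apply {m k : ℕ} (hm : 1 ≤ m) {σ : Perm ℕ} (hσ : σ ∈ WB m)
    (hk1 : 1 ≤ k) (hkm : k ≤ m) (h1 : σ 1 = k ∨ σ 1 + k = 2 * m + 2)
    (hj : ∀ j, 2 ≤ j → j ≤ m → σ j = if j ≤ k then j - 1 else j) : IsFinalEltB m σ := by
  have hσj (j : ℕ) (hj1 : 1 ≤ j) (hjm : j ≤ m) :
      σ j = if j = 1 then σ 1 else if j ≤ k then j - 1 else j := by
    rcases hj1.eq_or_lt with rfl | hj1
    · simp
    · rw [if_neg (by omega), hj j hj1 hjm]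
  rcases h1 with h1 | h1
  · refine Or.inr ⟨k - 1, by omega,
      WB.ext_of_eqOn hσ (prodDesc_mem (by omega)) fun j hj1 hjm => ?_⟩
    rw [hσj j hj1 hjm, prodDesc_apply (by omega) hjm]
    split_ifs <;> omega
  rcases hkm.eq_or_lt with rfl | hkm
  · refine Or.inr ⟨k, le_rfl, WB.ext_of_eqOn hσ (prodDesc_mem le_rfl) fun j hj1 hjm => ?_⟩
    rw [hσj j hj1 hjm, prodDesc_self_apply hm hjm]
    split_ifs <;> omega
  · refine Or.inl ⟨k, hk1, by omega, WB.ext_of_eqOn hσ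
      (WB.mul_mem (prodAsc_mem hk1) (prodDesc_mem (by omega))) fun j hj1 hjm => ?_⟩
    rw [hσj j hj1 hjm, Perm.mul_apply, prodDesc_apply (by omega) hjm, prodAsc_apply hk1] <;>
      split_ifs <;> omega

theorem exists_apply_eq_of_no_descent {m : ℕ} (hm : 1 ≤ m) {σ : Perm ℕ} (hσ : σ ∈ WB m)
    (hchain : ∀ i, 2 ≤ i → i < m → σ i ≤ σ (i + 1)) (hlast : 2 ≤ m → σ m ≤ m + 1) :
    ∃ k, 1 ≤ k ∧ k ≤ m ∧ (σ 1 = k ∨ σ 1 + k = 2 * m + 2) ∧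
      ∀ j, 2 ≤ j → j ≤ m → σ j = if j ≤ k then j - 1 else j := by
  have hb1 := WB.apply_bounds hσ le_rfl (by omega : 1 ≤ 2 * m + 1)
  have h1mid := WB.apply_ne_mid hσ (k := 1) (by omega)
  set k := if σ 1 ≤ m then σ 1 else 2 * m + 2 - σ 1
  have hk1 : 1 ≤ k := by simp only [k]; split_ifs <;> omega
  have hkm : k ≤ m := by simp only [k]; split_ifs <;> omega
  have h1k : σ 1 = k ∨ σ 1 + k = 2 * m + 2 := by simp only [k]; split_ifs <;> omega
  obtain ⟨A, -, -, hA⟩ := WB.exists_abs_preimage hσ hk1 hkm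
  have hA1 : 1 = A := (hA 1 le_rfl hm).1 h1k
  have hne_k (j : ℕ) (hj2 : 2 ≤ j) (hjm : j ≤ m) : σ j ≠ k :=
    fun h => by have := (hA j (by omega) hjm).1 (Or.inl h); omega
  have hgap (j j' : ℕ) (hj2 : 2 ≤ j) (hjj' : j ≤ j') (hj'm : j' ≤ m) : σ j + (j' - j) ≤ σ j' := by
    induction j', hjj' using Nat.le_induction with
    | base => omega
    | succ j' hjj' ih =>
      have hle := hchain j' (by omega) (by omega)
      have hne : σ j' ≠ σ (j' + 1) := fun h => by have := σ.injective h; omega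
      have := ih (by omega)
      omega
  have hlow (j : ℕ) (hj2 : 2 ≤ j) (hjm : j ≤ m) : j - 1 ≤ σ j := by
    have := hgap 2 j le_rfl hj2 hjm
    have := (WB.apply_bounds hσ (i := 2) (by omega) (by omega)).1
    omega
  have hup (j : ℕ) (hj2 : 2 ≤ j) (hjm : j ≤ m) : σ j ≤ j := by
    have := hgap j m hj2 hjm le_rfl
    have := hlast (by omega)
    have := WB.apply_ne_mid hσ (k := m) (by omega)
    omega
  refine ⟨k, hk1, hkm, h1k, fun j hj2 hjm => ?_⟩
  split_ifs with hjk
  · have := hgap j k hj2 hjk hkm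
    have := hup k (by omega) hkm
    have := hne_k k (by omega) hkm
    have := hlow j hj2 hjm
    omega
  · have := hgap (k + 1) j (by omega) (by omega) hjm
    have := hlow (k + 1) (by omega) (by omega)
    have := hne_k (k + 1) (by omega) (by omega)
    have := hup j hj2 hjm
    omega

theorem WB.mem_of_elemShuffleB {m i : ℕ} {u v : Perm ℕ} (hu : u ∈ WB m)
    (h : ElemShuffleB m i u v) : v ∈ WB m := by
  obtain ⟨hi1, him, -, -, rfl⟩ := h
  exact WB.mul_mem (WB.mul_mem (sB_mem (by omega) him) hu) (sB_mem (by omega) him)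

theorem ambiguous_or_final_of_forall_not_elemShuffleB {m : ℕ} (hm : 1 ≤ m) {v : Perm ℕ}
    (hv : v ∈ WB m) (hstuck : ∀ i v', ¬ ElemShuffleB m i v v') :
    (∃ i, 1 < i ∧ i ≤ m ∧ lenB m (v * sB m i) + 1 = lenB m v ∧
      lenB m (sB m i * v * sB m i) + 2 = lenB m v) ∨ IsFinalEltB m v := by
  by_cases hd : ∃ i, 1 < i ∧ i ≤ m ∧ lenB m (v * sB m i) + 1 = lenB m v
  · obtain ⟨i, hi1, him, hlen⟩ := hd
    rcases lenB_sB_mul (by omega) him (WB.mul_mem hv (sB_mem (by omega) him)) with h | h <;>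
      rw [← mul_assoc] at h
    · exact Or.inl ⟨i, hi1, him, hlen, by omega⟩
    · exact absurd ⟨hi1, him, hlen, by omega, rfl⟩ (hstuck i _)
  · push Not at hd
    obtain ⟨k, hk1, hkm, h1, hj⟩ := exists_apply_eq_of_no_descent hm hv
      (fun i hi2 him => by
        by_contra! h
        exact hd i (by omega) him.le (lenB_mul_sB_add_one_of_lt (by omega) him h))
      (fun hm2 => by
        by_contra! h
        exact hd m (by omega) le_rfl (lenB_mul_sB_self_add_one hm hv h))
    exact Or.inr (isFinalEltB_of_apply hm hv hk1 hkm h1 hj)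

/-- For every `w ∈ W_B^m` there is a shuffle sequence starting with `w` which is
ambiguous, final, or cyclic. -/
theorem stmt13 (m : ℕ) (hm : 1 ≤ m) (w : Equiv.Perm ℕ) (hw : w ∈ WB m) :
    ∃ r u, IsShuffleSeqB m r u ∧ u 1 = w ∧
      (SeqAmbiguousB m r u ∨ IsFinalEltB m (u r) ∨ SeqCyclic r u) := by
  obtain ⟨r, u, hr, hsteps, hu1, hend⟩ := exists_chain_stuck_or_cyclic (WB.finite m)
    (R := fun u v => ∃ i, ElemShuffleB m i u v)
    (fun _ _ hu ⟨_, h⟩ => WB.mem_of_elemShuffleB hu h) hw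
  refine ⟨r, u, ⟨hr, hsteps⟩, hu1, ?_⟩
  rcases hend with ⟨hmem, hstuck⟩ | hcyclic
  · rcases ambiguous_or_final_of_forall_not_elemShuffleB hm hmem
      (fun i v h => hstuck v ⟨i, h⟩) with h | h
    exacts [Or.inl h, Or.inr (Or.inl h)]
  · exact Or.inr (Or.inr hcyclic)
end

section
/- Let 𝕜 be a field of characteristic ≠ 2 and V a 2m-dimensional 𝕜-vector space with a nondegenerate alternating bilinear form ⟨·,·⟩. For any two complete totally isotropic flags F_• and D_• in V, extended to complete self-dual flags, there exist an element w ∈ W_C^m and a basis e_1,…,e_{2m} of V with ⟨e_i,e_j⟩ = 1 if i < j and i+j = 2m+1, ⟨e_i,e_j⟩ = −1 if i > j and i+j = 2m+1, and ⟨e_i,e_j⟩ = 0 otherwise, such that F_i = span(e_1,…,e_i) and D_i = span(e_{w⁻¹(1)},…,e_{w⁻¹(i)}) for all 1 ≤ i ≤ 2m; moreover the element w is uniquely determined by the pair (F_•, D_•). -/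
/-- `F 1 ⊂ ⋯ ⊂ F (2m) = V` is a complete self-dual flag extending a complete
totally isotropic flag: `dim F i = i` for `1 ≤ i ≤ m`, the form vanishes on `F m`,
and `F (2m−j) = (F j)^⊥` for `0 ≤ j ≤ m−1` (with `F 0 = ⊥`). -/
def IsSelfDualFlag {k V : Type*} [Field k] [AddCommGroup V] [Module k V]
    (m : ℕ) (B : LinearMap.BilinForm k V) (F : ℕ → Submodule k V) : Prop :=
  F 0 = ⊥ ∧
  (∀ i, 1 ≤ i → i ≤ m → Module.finrank k (F i) = i) ∧
  (∀ i, i < m → F i ≤ F (i + 1)) ∧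
  (∀ x ∈ F m, ∀ y ∈ F m, B x y = 0) ∧
  (∀ j, j ≤ m - 1 → F (2 * m - j) = B.orthogonal (F j))

/-- `e 1, …, e (2m)` is a basis of `V` adapted to the pair of flags `(F, D)` with
relative position `w`: the pairings are `⟨e i, e j⟩ = 1` if `i < j`, `i+j = 2m+1`,
`⟨e i, e j⟩ = −1` if `i > j`, `i+j = 2m+1`, and `0` otherwise, and
`F i = span(e 1,…,e i)`, `D i = span(e (w⁻¹ 1),…,e (w⁻¹ i))`. -/
def Adapted {k V : Type*} [Field k] [AddCommGroup V] [Module k V]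
    (m : ℕ) (B : LinearMap.BilinForm k V) (F D : ℕ → Submodule k V)
    (w : Equiv.Perm ℕ) : Prop :=
  ∃ e : ℕ → V,
    LinearIndependent k (fun i : (Set.Icc 1 (2 * m) : Set ℕ) => e (i : ℕ)) ∧
    Submodule.span k (e '' Set.Icc 1 (2 * m)) = ⊤ ∧
    (∀ i j, 1 ≤ i → i ≤ 2 * m → 1 ≤ j → j ≤ 2 * m →
      B (e i) (e j) =
        if i + j = 2 * m + 1 then (if i < j then (1 : k) else -1) else 0) ∧
    (∀ i, 1 ≤ i → i ≤ 2 * m → F i = Submodule.span k (e '' Set.Icc 1 i)) ∧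
    (∀ i, 1 ≤ i → i ≤ 2 * m →
      D i = Submodule.span k ((fun j => e (w⁻¹ j)) '' Set.Icc 1 i))

/-!
The relative position is read off the lattice of subspaces: `w i` is the least `b` with
`F i ≤ F (i - 1) ⊔ D b`. Since `F (i - 1) ⋖ F i`, this holds iff `F i ⊓ D b ⊄ F (i - 1)`, so
picking `e i ∈ (F i ⊓ D (w i)) \ F (i - 1)` gives a family adapted to both flags, and `w` is
injective. Taking orthogonals (`(F j)ᗮ = F (2m - j)`) turns the condition for `i` and `b` into the
negated condition for `2m + 1 - i` and `2m - b`, whence `w i + w (2m + 1 - i) = 2m + 1`. A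
symplectic Gram–Schmidt process then makes the Gram matrix antidiagonal: it only subtracts vectors
lying lower in both flags, because a nonzero pairing `⟨e c, e a⟩` forces `w c + w a > 2m`.
Rescaling the second half normalises the pairings. Uniqueness: for any adapted basis, `e i` lies
outside `F (i - 1) ⊔ D b` exactly when `b < w i`, so `w` is the same least index.
-/

open Module Submodule

theorem CovBy.le_sup_iff_not_inf_le {α : Type*} [Lattice α] [IsModularLattice α] {a b c : α}
    (h : a ⋖ b) : b ≤ a ⊔ c ↔ ¬ b ⊓ c ≤ a := by
  constructor
  · intro hb hbc
    have hb' : b = a ⊔ c ⊓ b := by rw [← sup_inf_assoc_of_le c h.le, inf_eq_right.2 hb]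
    exact h.lt.not_ge (hb' ▸ sup_le le_rfl (inf_comm b c ▸ hbc))
  · intro hbc
    have hb : a ⊔ b ⊓ c = b :=
      (h.eq_or_eq le_sup_left (sup_le h.le inf_le_left)).resolve_left
        fun h' => hbc (h' ▸ le_sup_right)
    exact hb ▸ sup_le_sup_left inf_le_right a

section

variable {k V : Type*} [Field k] [AddCommGroup V] [Module k V]

theorem Submodule.covBy_of_finrank_eq_add_one [FiniteDimensional k V] {p q : Submodule k V}
    (hle : p ≤ q) (h : finrank k q = finrank k p + 1) : p ⋖ q := by
  refine ⟨lt_of_le_of_ne hle fun hpq => by rw [hpq] at h; omega, fun r hpr hrq => ?_⟩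
  have := finrank_lt_finrank_of_lt hpr
  have := finrank_lt_finrank_of_lt hrq
  omega

theorem Submodule.mem_diff_of_sub_mem {P Q : Submodule k V} (hQP : Q ≤ P) {x y : V}
    (hx : x ∈ (P \ Q : Set V)) (hxy : y - x ∈ Q) : y ∈ (P \ Q : Set V) := by
  refine ⟨by simpa using P.add_mem (hQP hxy) hx.1, fun hy => hx.2 ?_⟩
  simpa using Q.sub_mem hy hxy

structure IsCompleteFlag (F : ℕ → Submodule k V) (n : ℕ) : Prop where
  bot : F 0 = ⊥
  top : F n = ⊤
  covBy : ∀ i, 1 ≤ i → i ≤ n → F (i - 1) ⋖ F i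

namespace IsCompleteFlag

variable {F : ℕ → Submodule k V} {n : ℕ} (hF : IsCompleteFlag F n)
include hF

theorem mono {i j : ℕ} (hij : i ≤ j) (hj : j ≤ n) : F i ≤ F j := by
  induction j, hij using Nat.le_induction with
  | base => exact le_rfl
  | succ j _ ih => exact (ih (by omega)).trans (hF.covBy (j + 1) (by omega) hj).le

theorem sup_span_singleton_eq {i : ℕ} (hi1 : 1 ≤ i) (hi2 : i ≤ n) {x : V}
    (hx : x ∈ (F i \ F (i - 1) : Set V)) : F (i - 1) ⊔ span k {x} = F i :=
  ((hF.covBy i hi1 hi2).eq_or_eq le_sup_left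
    (sup_le (hF.covBy i hi1 hi2).le ((span_singleton_le_iff_mem x _).2 hx.1))).resolve_left
    fun h => hx.2 (h ▸ mem_sup_right (mem_span_singleton_self x))

theorem eq_span_image {x : ℕ → V} (hx : ∀ i ∈ Set.Icc 1 n, x i ∈ (F i \ F (i - 1) : Set V))
    {i : ℕ} (hi : i ≤ n) : F i = span k (x '' Set.Icc 1 i) := by
  induction i with
  | zero => simp [hF.bot]
  | succ i ih =>
    have hIcc : Set.Icc 1 (i + 1) = insert (i + 1) (Set.Icc 1 i) := by
      ext a; simp only [Set.mem_insert_iff, Set.mem_Icc]; omega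
    rw [hIcc, Set.image_insert_eq, span_insert, ← ih (by omega), sup_comm]
    exact (hF.sup_span_singleton_eq (by omega) hi (hx (i + 1) ⟨by omega, hi⟩)).symm

theorem linearIndepOn {x : ℕ → V} (hx : ∀ i ∈ Set.Icc 1 n, x i ∈ (F i \ F (i - 1) : Set V))
    (hdim : finrank k V = n) : LinearIndepOn k x (Set.Icc 1 n) := by
  apply linearIndependent_of_top_le_span_of_card_eq_finrank
  · rw [← Set.image_eq_range, ← hF.eq_span_image hx le_rfl, hF.top]
  · simp [hdim]

end IsCompleteFlag

theorem LinearMap.BilinForm.orthogonal_sup (B : LinearMap.BilinForm k V) (p q : Submodule k V) :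
    B.orthogonal (p ⊔ q) = B.orthogonal p ⊓ B.orthogonal q := by
  refine le_antisymm (le_inf (B.orthogonal_le le_sup_left) (B.orthogonal_le le_sup_right)) ?_
  intro z hz
  obtain ⟨hp, hq⟩ := mem_inf.1 hz
  rw [LinearMap.BilinForm.mem_orthogonal_iff] at hp hq ⊢
  intro x hx
  obtain ⟨y, hy, y', hy', rfl⟩ := mem_sup.1 hx
  simp only [map_add, LinearMap.add_apply] at hp hq ⊢
  rw [hp y hy, hq y' hy', add_zero]

theorem LinearMap.BilinForm.orthogonal_le_orthogonal_iff [FiniteDimensional k V]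
    {B : LinearMap.BilinForm k V} (hB : B.IsRefl) (hnd : B.Nondegenerate) {p q : Submodule k V} :
    B.orthogonal p ≤ B.orthogonal q ↔ q ≤ p := by
  refine ⟨fun h => ?_, B.orthogonal_le⟩
  simpa only [B.orthogonal_orthogonal hnd hB] using B.orthogonal_le h

structure IsCompleteSelfDualFlag (B : LinearMap.BilinForm k V) (m : ℕ)
    (F : ℕ → Submodule k V) : Prop extends IsCompleteFlag F (2 * m) where
  orthogonal_eq : ∀ j ≤ 2 * m, B.orthogonal (F j) = F (2 * m - j)

section SelfDualFlag

variable {B : LinearMap.BilinForm k V} {m : ℕ} {F : ℕ → Submodule k V}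

namespace IsCompleteSelfDualFlag

variable (hF : IsCompleteSelfDualFlag B m F)
include hF

theorem apply_eq_zero {i j : ℕ} (hij : i + j ≤ 2 * m) {x y : V} (hx : x ∈ F i) (hy : y ∈ F j) :
    B x y = 0 := by
  have hy' : y ∈ B.orthogonal (F i) :=
    hF.orthogonal_eq i (by omega) ▸ hF.mono (by omega) (by omega) hy
  exact (B.mem_orthogonal_iff).1 hy' x hx

theorem apply_ne_zero (hB : B.IsRefl) {a : ℕ} (ha1 : 1 ≤ a) (ha2 : a ≤ 2 * m) {x y : V}
    (hx : x ∈ (F (2 * m + 1 - a) \ F (2 * m - a) : Set V)) (hy : y ∈ (F a \ F (a - 1) : Set V)) :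
    B x y ≠ 0 := by
  intro hxy
  apply hx.2
  rw [SetLike.mem_coe, ← hF.orthogonal_eq a ha2, B.mem_orthogonal_iff,
    ← hF.sup_span_singleton_eq ha1 ha2 hy]
  intro z hz
  obtain ⟨z₁, hz₁, z₂, hz₂, rfl⟩ := mem_sup.1 hz
  obtain ⟨c, rfl⟩ := mem_span_singleton.1 hz₂
  simp only [map_add, map_smul, LinearMap.add_apply, LinearMap.smul_apply, hB _ _ hxy, smul_zero,
    add_zero]
  exact hF.apply_eq_zero (by omega) hz₁ hx.1

end IsCompleteSelfDualFlag

namespace IsSelfDualFlag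

theorem finrank_eq_of_le (hF : IsSelfDualFlag m B F) {i : ℕ} (hi : i ≤ m) :
    finrank k (F i) = i := by
  rcases Nat.eq_zero_or_pos i with rfl | hi0
  · rw [hF.1, finrank_bot]
  · exact hF.2.1 i hi0 hi

variable [FiniteDimensional k V] (hdim : finrank k V = 2 * m) (hB : B.IsRefl) (hnd : B.Nondegenerate)
  (hF : IsSelfDualFlag m B F)
include hdim hB hnd hF

theorem orthogonal_eq {j : ℕ} (hj : j ≤ 2 * m) : B.orthogonal (F j) = F (2 * m - j) := by
  rcases lt_trichotomy j m with hjm | hjm | hjm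
  · exact (hF.2.2.2.2 j (by omega)).symm
  · rw [hjm, show 2 * m - m = m by omega]
    refine (eq_of_le_of_finrank_le (fun x hx => ?_) ?_).symm
    · exact (B.mem_orthogonal_iff).2 fun y hy => hF.2.2.2.1 y hy x hx
    · rw [B.finrank_orthogonal hnd, hdim, finrank_eq_of_le hF le_rfl]
      omega
  · have hFj := hF.2.2.2.2 (2 * m - j) (by omega)
    rw [show 2 * m - (2 * m - j) = j by omega] at hFj
    rw [hFj, B.orthogonal_orthogonal hnd hB]

theorem eq_orthogonal {j : ℕ} (hj : j ≤ 2 * m) : F j = B.orthogonal (F (2 * m - j)) := by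
  rw [orthogonal_eq hdim hB hnd hF (by omega), show 2 * m - (2 * m - j) = j by omega]

theorem finrank_eq {i : ℕ} (hi : i ≤ 2 * m) : finrank k (F i) = i := by
  rcases le_or_gt i m with him | him
  · exact finrank_eq_of_le hF him
  · rw [eq_orthogonal hdim hB hnd hF hi, B.finrank_orthogonal hnd, hdim,
      finrank_eq_of_le hF (by omega)]
    omega

theorem le_succ {i : ℕ} (hi : i < 2 * m) : F i ≤ F (i + 1) := by
  rcases lt_or_ge i m with him | him
  · exact hF.2.2.1 i him
  · rw [eq_orthogonal hdim hB hnd hF hi.le, eq_orthogonal hdim hB hnd hF hi]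
    apply B.orthogonal_le
    rcases Nat.eq_zero_or_pos (2 * m - (i + 1)) with h | h
    · simp [h, hF.1]
    · simpa [show 2 * m - (i + 1) + 1 = 2 * m - i by omega] using
        hF.2.2.1 (2 * m - (i + 1)) (by omega)

theorem isCompleteSelfDualFlag : IsCompleteSelfDualFlag B m F where
  bot := hF.1
  top := eq_top_of_finrank_eq (by rw [finrank_eq hdim hB hnd hF le_rfl, hdim])
  covBy i hi1 hi2 := by
    refine covBy_of_finrank_eq_add_one ?_ ?_
    · simpa [show i - 1 + 1 = i by omega] using le_succ hdim hB hnd hF (i := i - 1) (by omega)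
    · rw [finrank_eq hdim hB hnd hF hi2, finrank_eq hdim hB hnd hF (by omega)]
      omega
  orthogonal_eq _ hj := orthogonal_eq hdim hB hnd hF hj

end IsSelfDualFlag

end SelfDualFlag

section RelativePosition

variable {F D : ℕ → Submodule k V} {n : ℕ}

def IsAdaptedFamily (F D : ℕ → Submodule k V) (n : ℕ) (σ : ℕ → ℕ) (e : ℕ → V) : Prop :=
  ∀ i ∈ Set.Icc 1 n, e i ∈ (F i \ F (i - 1) : Set V) ∧ e i ∈ (D (σ i) \ D (σ i - 1) : Set V)

noncomputable def relPos (F D : ℕ → Submodule k V) (i : ℕ) : ℕ :=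
  sInf {b | F i ≤ F (i - 1) ⊔ D b}

theorem relPos_le (hD : IsCompleteFlag D n) (i : ℕ) : relPos F D i ≤ n :=
  Nat.sInf_le (by simp [hD.top])

theorem relPos_le_iff (hD : IsCompleteFlag D n) {i b : ℕ} (hb : b ≤ n) :
    relPos F D i ≤ b ↔ F i ≤ F (i - 1) ⊔ D b := by
  refine ⟨fun h => ?_, fun h => Nat.sInf_le h⟩
  have hmem : relPos F D i ∈ {b | F i ≤ F (i - 1) ⊔ D b} := Nat.sInf_mem ⟨n, by simp [hD.top]⟩
  exact hmem.trans (sup_le_sup_left (hD.mono h hb) _)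

theorem le_sup_relPos (hD : IsCompleteFlag D n) (i : ℕ) :
    F i ≤ F (i - 1) ⊔ D (relPos F D i) :=
  (relPos_le_iff hD (relPos_le hD i)).1 le_rfl

variable (hF : IsCompleteFlag F n) (hD : IsCompleteFlag D n)
include hF hD

theorem one_le_relPos {i : ℕ} (hi1 : 1 ≤ i) (hi2 : i ≤ n) : 1 ≤ relPos F D i := by
  by_contra h
  have hle := le_sup_relPos (F := F) hD i
  rw [show relPos F D i = 0 by omega, hD.bot, sup_bot_eq] at hle
  exact (hF.covBy i hi1 hi2).lt.not_ge hle

theorem not_le_sup_relPos_sub_one {i : ℕ} (hi1 : 1 ≤ i) (hi2 : i ≤ n) :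
    ¬ F i ≤ F (i - 1) ⊔ D (relPos F D i - 1) := by
  have := one_le_relPos hF hD hi1 hi2
  rw [← relPos_le_iff hD (by have := relPos_le (F := F) hD i; omega)]
  omega

theorem exists_mem_diff_relPos {i : ℕ} (hi1 : 1 ≤ i) (hi2 : i ≤ n) :
    ∃ x, x ∈ (F i \ F (i - 1) : Set V) ∧
    x ∈ (D (relPos F D i) \ D (relPos F D i - 1) : Set V) := by
  have h := (hF.covBy i hi1 hi2).le_sup_iff_not_inf_le.1 (le_sup_relPos hD i)
  obtain ⟨x, hx, hxF⟩ := SetLike.not_le_iff_exists.1 h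
  obtain ⟨hxFi, hxD⟩ := mem_inf.1 hx
  refine ⟨x, ⟨hxFi, hxF⟩, hxD, fun hxD' => not_le_sup_relPos_sub_one hF hD hi1 hi2 ?_⟩
  rw [← hF.sup_span_singleton_eq hi1 hi2 ⟨hxFi, hxF⟩]
  exact sup_le_sup_left ((span_singleton_le_iff_mem _ _).2 hxD') _

theorem exists_isAdaptedFamily_relPos : ∃ e, IsAdaptedFamily F D n (relPos F D) e := by
  have h : ∀ i, ∃ x : V, i ∈ Set.Icc 1 n → x ∈ (F i \ F (i - 1) : Set V) ∧
      x ∈ (D (relPos F D i) \ D (relPos F D i - 1) : Set V) := fun i =>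
    if hi : i ∈ Set.Icc 1 n then (exists_mem_diff_relPos hF hD hi.1 hi.2).imp fun _ hx _ => hx
    else ⟨0, fun hi' => absurd hi' hi⟩
  choose e he using h
  exact ⟨e, he⟩

theorem relPos_ne_of_lt {i i' : ℕ} (hi : i ∈ Set.Icc 1 n) (hi' : i' ∈ Set.Icc 1 n) (hlt : i' < i) :
    relPos F D i' ≠ relPos F D i := by
  intro heq
  obtain ⟨x, hxF, hxD⟩ := exists_mem_diff_relPos hF hD hi'.1 hi'.2
  rw [heq] at hxD
  have hr1 := one_le_relPos hF hD hi.1 hi.2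
  have hr2 := relPos_le (F := F) hD i
  apply not_le_sup_relPos_sub_one hF hD hi.1 hi.2
  calc F i ≤ F (i - 1) ⊔ D (relPos F D i) := le_sup_relPos hD i
    _ = F (i - 1) ⊔ (D (relPos F D i - 1) ⊔ span k {x}) := by
      rw [hD.sup_span_singleton_eq hr1 hr2 hxD]
    _ ≤ F (i - 1) ⊔ D (relPos F D i - 1) :=
      sup_le le_sup_left (sup_le le_sup_right (((span_singleton_le_iff_mem _ _).2
        (hF.mono (by omega) (by have := hi.2; omega) hxF.1)).trans le_sup_left))

theorem relPos_injOn : Set.InjOn (relPos F D) (Set.Icc 1 n) := by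
  intro i hi i' hi' heq
  rcases lt_trichotomy i i' with hlt | rfl | hlt
  · exact absurd heq (relPos_ne_of_lt hF hD hi' hi hlt)
  · rfl
  · exact absurd heq.symm (relPos_ne_of_lt hF hD hi hi' hlt)

end RelativePosition

section Duality

variable [FiniteDimensional k V] {B : LinearMap.BilinForm k V} {m : ℕ} {F D : ℕ → Submodule k V}
  (hB : B.IsRefl) (hnd : B.Nondegenerate)
  (hF : IsCompleteSelfDualFlag B m F) (hD : IsCompleteSelfDualFlag B m D)
include hB hnd hF hD

theorem IsCompleteSelfDualFlag.le_sup_iff_not_le_sup {i b : ℕ} (hi1 : 1 ≤ i) (hi2 : i ≤ 2 * m)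
    (hb : b ≤ 2 * m) :
    F i ≤ F (i - 1) ⊔ D b ↔ ¬ F (2 * m + 1 - i) ≤ F (2 * m - i) ⊔ D (2 * m - b) := by
  have hcov : F (2 * m - i) ⋖ F (2 * m + 1 - i) := by
    simpa [show 2 * m + 1 - i - 1 = 2 * m - i by omega] using
      hF.covBy (2 * m + 1 - i) (by omega) (by omega)
  rw [hcov.le_sup_iff_not_inf_le, not_not, ← B.orthogonal_le_orthogonal_iff hB hnd,
    B.orthogonal_sup, hF.orthogonal_eq _ (by omega), hF.orthogonal_eq _ hi2,
    hD.orthogonal_eq _ hb, show 2 * m - (i - 1) = 2 * m + 1 - i by omega]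

theorem relPos_add_relPos_two_mul_add_one_sub {i : ℕ} (hi1 : 1 ≤ i) (hi2 : i ≤ 2 * m) :
    relPos F D i + relPos F D (2 * m + 1 - i) = 2 * m + 1 := by
  have key : ∀ b ≤ 2 * m, relPos F D (2 * m + 1 - i) ≤ b ↔ ¬ relPos F D i ≤ 2 * m - b := by
    intro b hb
    rw [relPos_le_iff hD.toIsCompleteFlag hb, relPos_le_iff hD.toIsCompleteFlag (by omega),
      hF.le_sup_iff_not_le_sup hB hnd hD (by omega) (by omega) hb,
      show 2 * m + 1 - (2 * m + 1 - i) = i by omega, show 2 * m - (2 * m + 1 - i) = i - 1 by omega]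
  have h1 := one_le_relPos hF.toIsCompleteFlag hD.toIsCompleteFlag hi1 hi2
  have h2 := relPos_le (F := F) hD.toIsCompleteFlag i
  have h3 := relPos_le (F := F) hD.toIsCompleteFlag (2 * m + 1 - i)
  have h4 := key _ h3
  have h5 := key (2 * m + 1 - relPos F D i) (by omega)
  omega

end Duality

section GramSchmidt

theorem IsAdaptedFamily.of_sub_mem {F D : ℕ → Submodule k V} {n N : ℕ} {σ : ℕ → ℕ} {e x : ℕ → V}
    (hF : IsCompleteFlag F n) (hD : IsCompleteFlag D n) (hN : N ≤ n)
    (hσ : ∀ i ∈ Set.Icc 1 N, σ i ≤ n) (he : IsAdaptedFamily F D N σ e)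
    (hx : ∀ i ∈ Set.Icc 1 N, x i - e i ∈ F (i - 1) ⊓ D (σ i - 1)) :
    IsAdaptedFamily F D N σ x := fun i hi =>
  ⟨mem_diff_of_sub_mem (hF.mono (by omega) (by have := hi.2; omega)) (he i hi).1
      (mem_inf.1 (hx i hi)).1,
    mem_diff_of_sub_mem (hD.mono (by omega) (hσ i hi)) (he i hi).2 (mem_inf.1 (hx i hi)).2⟩

theorem IsAdaptedFamily.smul {F D : ℕ → Submodule k V} {n : ℕ} {σ : ℕ → ℕ} {e : ℕ → V}
    (he : IsAdaptedFamily F D n σ e) {c : ℕ → k} (hc : ∀ i ∈ Set.Icc 1 n, c i ≠ 0) :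
    IsAdaptedFamily F D n σ (fun i => c i • e i) := fun i hi => by
  simp only [Set.mem_sdiff, SetLike.mem_coe, smul_mem_iff _ (hc i hi)]
  exact he i hi

def IsAntidiagonal (B : LinearMap.BilinForm k V) (m N : ℕ) (x : ℕ → V) : Prop :=
  ∀ b ∈ Set.Icc 1 N, ∀ c ∈ Set.Icc 1 N, B (x b) (x c) = 0 ↔ b + c ≠ 2 * m + 1

theorem IsAntidiagonal.of_lt {B : LinearMap.BilinForm k V} (hB : B.IsAlt) {m N : ℕ} {x : ℕ → V}
    (h : ∀ c ∈ Set.Icc 1 N, ∀ b ∈ Set.Icc 1 (c - 1), B (x b) (x c) = 0 ↔ b + c ≠ 2 * m + 1) :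
    IsAntidiagonal B m N x := by
  intro b hb c hc
  rcases lt_trichotomy b c with hbc | rfl | hbc
  · exact h c hc b ⟨hb.1, by omega⟩
  · exact iff_of_true (hB _) (by omega)
  · rw [hB.eq_iff, add_comm]
    exact h b hb c ⟨hc.1, by omega⟩

variable (B : LinearMap.BilinForm k V) (m : ℕ) (e : ℕ → V)

/-- `c` runs over the indices for which both `c` and its partner `2m + 1 - c` are below `a`, so
the sum removes the components of `e a` along the hyperbolic pairs constructed so far. -/
noncomputable def symplecticGramSchmidt : ℕ → V
  | a => e a - ∑ c ∈ (Finset.Ioo (2 * m + 1 - a) a).attach,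
      (B (symplecticGramSchmidt c) (e a) /
        B (symplecticGramSchmidt c) (symplecticGramSchmidt (2 * m + 1 - c))) •
        symplecticGramSchmidt (2 * m + 1 - c)
  termination_by a => a
  decreasing_by all_goals have := Finset.mem_Ioo.mp c.2; omega

theorem symplecticGramSchmidt_eq (a : ℕ) :
    symplecticGramSchmidt B m e a = e a - ∑ c ∈ Finset.Ioo (2 * m + 1 - a) a,
      (B (symplecticGramSchmidt B m e c) (e a) /
        B (symplecticGramSchmidt B m e c) (symplecticGramSchmidt B m e (2 * m + 1 - c))) •
        symplecticGramSchmidt B m e (2 * m + 1 - c) := by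
  rw [← Finset.sum_attach, symplecticGramSchmidt]

variable {B m e}

theorem apply_symplecticGramSchmidt {a b : ℕ} (ha : a ≤ 2 * m) (hb : b ∈ Set.Icc 1 (a - 1))
    (hpair : IsAntidiagonal B m (a - 1) (symplecticGramSchmidt B m e)) :
    B (symplecticGramSchmidt B m e b) (symplecticGramSchmidt B m e a) =
      if 2 * m + 1 - a < b then 0 else B (symplecticGramSchmidt B m e b) (e a) := by
  rw [symplecticGramSchmidt_eq B m e a, map_sub, map_sum]
  set u := symplecticGramSchmidt B m e
  obtain ⟨hb1, hba⟩ := hb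
  have hterm : ∀ c ∈ Finset.Ioo (2 * m + 1 - a) a,
      B (u c) (e a) / B (u c) (u (2 * m + 1 - c)) * B (u b) (u (2 * m + 1 - c)) =
        if c = b then B (u b) (e a) else 0 := by
    intro c hc
    rw [Finset.mem_Ioo] at hc
    split_ifs with hcb
    · subst hcb
      refine div_mul_cancel₀ _ fun h0 => ?_
      exact (hpair c ⟨by omega, by omega⟩ (2 * m + 1 - c) ⟨by omega, by omega⟩).1 h0 (by omega)
    · rw [(hpair b ⟨hb1, hba⟩ _ ⟨by omega, by omega⟩).2 (by omega), mul_zero]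
  simp only [map_smul, smul_eq_mul]
  rw [Finset.sum_congr rfl hterm, Finset.sum_ite_eq']
  simp only [Finset.mem_Ioo]
  by_cases hlt : 2 * m + 1 - a < b
  · rw [if_pos ⟨hlt, by omega⟩, if_pos hlt, sub_self]
  · rw [if_neg fun h => hlt h.1, if_neg hlt, sub_zero]

variable {F D : ℕ → Submodule k V} {σ : ℕ → ℕ}
  (hF : IsCompleteSelfDualFlag B m F) (hD : IsCompleteSelfDualFlag B m D)
  (hσinj : Set.InjOn σ (Set.Icc 1 (2 * m))) (hσle : ∀ i ∈ Set.Icc 1 (2 * m), σ i ≤ 2 * m)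
  (hσsum : ∀ i ∈ Set.Icc 1 (2 * m), σ i + σ (2 * m + 1 - i) = 2 * m + 1)
include hF hD hσinj hσle hσsum

theorem symplecticGramSchmidt_sub_mem {a : ℕ} (ha : a ∈ Set.Icc 1 (2 * m))
    (hea : e a ∈ D (σ a)) (hu : IsAdaptedFamily F D (a - 1) σ (symplecticGramSchmidt B m e)) :
    symplecticGramSchmidt B m e a - e a ∈ F (a - 1) ⊓ D (σ a - 1) := by
  rw [symplecticGramSchmidt_eq B m e a, sub_sub_cancel_left]
  set u := symplecticGramSchmidt B m e
  obtain ⟨ha1, ha2⟩ := ha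
  refine neg_mem (sum_mem fun c hc => ?_)
  rw [Finset.mem_Ioo] at hc
  by_cases h0 : B (u c) (e a) = 0
  · rw [h0, zero_div, zero_smul]
    exact zero_mem _
  have hσc : 2 * m + 1 ≤ σ c + σ a := by
    by_contra hlt
    exact h0 (hD.apply_eq_zero (by omega) (hu c ⟨by omega, by omega⟩).2.1 hea)
  have hσc' : σ (2 * m + 1 - c) < σ a := by
    have hsum := hσsum c ⟨by omega, by omega⟩
    have hne : σ (2 * m + 1 - c) ≠ σ a := fun h =>
      (by omega : 2 * m + 1 - c ≠ a) (hσinj ⟨by omega, by omega⟩ ⟨ha1, ha2⟩ h)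
    omega
  have huc' := hu (2 * m + 1 - c) ⟨by omega, by omega⟩
  exact smul_mem _ _ (mem_inf.2 ⟨hF.mono (by omega) (by omega) huc'.1.1,
    hD.mono (by omega) (by have := hσle a ⟨ha1, ha2⟩; omega) huc'.2.1⟩)

theorem symplecticGramSchmidt_spec (hB : B.IsAlt) (he : IsAdaptedFamily F D (2 * m) σ e) :
    ∀ a ∈ Set.Icc 1 (2 * m),
      symplecticGramSchmidt B m e a - e a ∈ F (a - 1) ⊓ D (σ a - 1) ∧
      ∀ b ∈ Set.Icc 1 (a - 1),
        (B (symplecticGramSchmidt B m e b) (symplecticGramSchmidt B m e a) = 0 ↔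
          b + a ≠ 2 * m + 1) := by
  set u := symplecticGramSchmidt B m e
  intro a
  induction a using Nat.strong_induction_on with
  | _ a ih =>
  intro ha
  obtain ⟨ha1, ha2⟩ := ha
  have hprev : ∀ c ∈ Set.Icc 1 (a - 1), c ∈ Set.Icc 1 (2 * m) ∧ c < a := fun c ⟨hc1, hc2⟩ =>
    ⟨⟨hc1, by omega⟩, by omega⟩
  have hu : IsAdaptedFamily F D (a - 1) σ u :=
    IsAdaptedFamily.of_sub_mem hF.toIsCompleteFlag hD.toIsCompleteFlag (by omega)
      (fun i hi => hσle i (hprev i hi).1) (fun i hi => he i (hprev i hi).1)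
      (fun i hi => (ih i (hprev i hi).2 (hprev i hi).1).1)
  have hpair : IsAntidiagonal B m (a - 1) u :=
    IsAntidiagonal.of_lt hB fun c hc => (ih c (hprev c hc).2 (hprev c hc).1).2
  have hea := he a ⟨ha1, ha2⟩
  refine ⟨symplecticGramSchmidt_sub_mem hF hD hσinj hσle hσsum ⟨ha1, ha2⟩ hea.2.1 hu,
    fun b hb => ?_⟩
  rw [apply_symplecticGramSchmidt ha2 hb hpair]
  split_ifs with hab
  · exact iff_of_true rfl (by omega)
  obtain ⟨hb1, hba⟩ := hb
  rcases (by omega : b < 2 * m + 1 - a ∨ b = 2 * m + 1 - a) with hb' | rfl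
  · exact iff_of_true (hF.apply_eq_zero (by omega) (hu b ⟨hb1, hba⟩).1.1 hea.1.1) (by omega)
  · have hub := (hu _ ⟨hb1, hba⟩).1
    rw [show 2 * m + 1 - a - 1 = 2 * m - a by omega] at hub
    exact iff_of_false (hF.apply_ne_zero hB.isRefl ha1 ha2 hub hea.1) (by omega)

theorem exists_isAdaptedFamily_isAntidiagonal (hB : B.IsAlt)
    (he : IsAdaptedFamily F D (2 * m) σ e) :
    ∃ u, IsAdaptedFamily F D (2 * m) σ u ∧ IsAntidiagonal B m (2 * m) u := by
  have hspec := symplecticGramSchmidt_spec hF hD hσinj hσle hσsum hB he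
  exact ⟨_, IsAdaptedFamily.of_sub_mem hF.toIsCompleteFlag hD.toIsCompleteFlag le_rfl hσle he
      fun a ha => (hspec a ha).1,
    IsAntidiagonal.of_lt hB fun a ha => (hspec a ha).2⟩

end GramSchmidt

section Rescaling

variable {B : LinearMap.BilinForm k V} {m : ℕ} {F D : ℕ → Submodule k V} {σ : ℕ → ℕ}

theorem exists_isAdaptedFamily_standard (hB : B.IsAlt) {u : ℕ → V}
    (hu : IsAdaptedFamily F D (2 * m) σ u) (hanti : IsAntidiagonal B m (2 * m) u) :
    ∃ v, IsAdaptedFamily F D (2 * m) σ v ∧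
      ∀ i j, 1 ≤ i → i ≤ 2 * m → 1 ≤ j → j ≤ 2 * m →
        B (v i) (v j) = if i + j = 2 * m + 1 then (if i < j then (1 : k) else -1) else 0 := by
  have hpair : ∀ i ∈ Set.Icc 1 (2 * m), ∀ j ∈ Set.Icc 1 (2 * m), i + j = 2 * m + 1 →
      B (u i) (u j) ≠ 0 := fun i hi j hj h h0 => (hanti i hi j hj).1 h0 h
  set c : ℕ → k := fun a => if m < a then (B (u (2 * m + 1 - a)) (u a))⁻¹ else 1
  have hc : ∀ a ∈ Set.Icc 1 (2 * m), c a ≠ 0 := by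
    intro a ha
    have := ha.1
    have := ha.2
    by_cases hma : m < a
    · simp only [c, if_pos hma]
      exact inv_ne_zero (hpair _ ⟨by omega, by omega⟩ a ha (by omega))
    · simp only [c, if_neg hma, ne_eq, one_ne_zero, not_false_eq_true]
  have hlt : ∀ i ∈ Set.Icc 1 (2 * m), ∀ j ∈ Set.Icc 1 (2 * m), i < j →
      B (c i • u i) (c j • u j) = if i + j = 2 * m + 1 then 1 else 0 := by
    intro i hi j hj hij
    simp only [map_smul, LinearMap.smul_apply, smul_eq_mul]
    split_ifs with h
    · simp only [c, if_neg (show ¬ m < i by omega), if_pos (show m < j by omega),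
        show 2 * m + 1 - j = i by omega, one_mul]
      exact inv_mul_cancel₀ (hpair i hi j hj h)
    · rw [(hanti i hi j hj).2 h, mul_zero, mul_zero]
  refine ⟨fun a => c a • u a, hu.smul hc, fun i j hi1 hi2 hj1 hj2 => ?_⟩
  show B (c i • u i) (c j • u j) = _
  rcases lt_trichotomy i j with hij | rfl | hij
  · rw [hlt i ⟨hi1, hi2⟩ j ⟨hj1, hj2⟩ hij, if_pos hij]
  · rw [hB, if_neg (by omega)]
  · rw [← hB.neg_eq (c j • u j) (c i • u i), hlt j ⟨hj1, hj2⟩ i ⟨hi1, hi2⟩ hij, add_comm,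
      if_neg (not_lt.2 hij.le)]
    split_ifs <;> simp

end Rescaling

section WeylGroup

theorem exists_perm_eqOn {n : ℕ} {σ : ℕ → ℕ} (hmaps : Set.MapsTo σ (Set.Icc 1 n) (Set.Icc 1 n))
    (hinj : Set.InjOn σ (Set.Icc 1 n)) :
    ∃ w : Equiv.Perm ℕ, Set.EqOn w σ (Set.Icc 1 n) ∧ ∀ i ∉ Set.Icc 1 n, w i = i := by
  classical
  have hbij := ((Set.finite_Icc 1 n).injOn_iff_bijOn_of_mapsTo hmaps).1 hinj
  exact ⟨Equiv.Perm.ofSubtype (hbij.equiv σ),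
    fun i hi => Equiv.Perm.ofSubtype_apply_of_mem _ hi,
    fun i hi => Equiv.Perm.ofSubtype_apply_of_not_mem _ hi⟩

variable {m : ℕ} {w : Equiv.Perm ℕ}

theorem mem_WC_of (hfix : ∀ i ∉ Set.Icc 1 (2 * m), w i = i)
    (hsum : ∀ i ∈ Set.Icc 1 (2 * m), w i + w (2 * m + 1 - i) = 2 * m + 1) : w ∈ WC m :=
  ⟨hfix 0 (by simp), fun i hi => hfix i (by simp; omega), fun i h1 h2 => hsum i ⟨h1, h2⟩⟩

namespace WC

variable (hw : w ∈ WC m)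
include hw

theorem apply_eq_self {i : ℕ} (hi : i ∉ Set.Icc 1 (2 * m)) : w i = i := by
  rcases Nat.eq_zero_or_pos i with rfl | hi0
  · exact hw.1
  · exact hw.2.1 i (by simp only [Set.mem_Icc, not_and, not_le] at hi; omega)

theorem apply_mem_Icc_iff {i : ℕ} : w i ∈ Set.Icc 1 (2 * m) ↔ i ∈ Set.Icc 1 (2 * m) := by
  refine ⟨fun h => ?_, fun hi => ?_⟩
  · by_contra hi
    exact hi (apply_eq_self hw hi ▸ h)
  · by_contra h
    rw [w.injective (apply_eq_self hw h)] at h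
    exact h hi

theorem inv_apply_mem_Icc_iff {i : ℕ} : w⁻¹ i ∈ Set.Icc 1 (2 * m) ↔ i ∈ Set.Icc 1 (2 * m) := by
  rw [← apply_mem_Icc_iff hw, show w (w⁻¹ i) = i from w.apply_symm_apply i]

theorem ext {w' : Equiv.Perm ℕ} (hw' : w' ∈ WC m) (h : Set.EqOn w w' (Set.Icc 1 (2 * m))) :
    w = w' := by
  ext i
  by_cases hi : i ∈ Set.Icc 1 (2 * m)
  · exact h hi
  · rw [apply_eq_self hw hi, apply_eq_self hw' hi]

end WC

end WeylGroup

section Adapted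

variable {B : LinearMap.BilinForm k V} {m : ℕ} {F D : ℕ → Submodule k V} {w : Equiv.Perm ℕ}

theorem adapted_of_isAdaptedFamily [FiniteDimensional k V] (hdim : finrank k V = 2 * m)
    (hF : IsCompleteFlag F (2 * m)) (hD : IsCompleteFlag D (2 * m)) (hw : w ∈ WC m) {v : ℕ → V}
    (hv : IsAdaptedFamily F D (2 * m) w v)
    (hpair : ∀ i j, 1 ≤ i → i ≤ 2 * m → 1 ≤ j → j ≤ 2 * m →
      B (v i) (v j) = if i + j = 2 * m + 1 then (if i < j then (1 : k) else -1) else 0) :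
    Adapted m B F D w := by
  have hvF : ∀ i ∈ Set.Icc 1 (2 * m), v i ∈ (F i \ F (i - 1) : Set V) := fun i hi => (hv i hi).1
  refine ⟨v, hF.linearIndepOn hvF hdim, by rw [← hF.eq_span_image hvF le_rfl, hF.top], hpair,
    fun i _ hi => hF.eq_span_image hvF hi, fun i _ hi => hD.eq_span_image (fun l hl => ?_) hi⟩
  have hvl := (hv _ ((WC.inv_apply_mem_Icc_iff hw).2 hl)).2
  rwa [show w (w⁻¹ l) = l from w.apply_symm_apply l] at hvl

theorem Adapted.exists_linearIndepOn_span (hF0 : F 0 = ⊥) (hD0 : D 0 = ⊥)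
    (had : Adapted m B F D w) :
    ∃ e : ℕ → V, LinearIndepOn k e (Set.Icc 1 (2 * m)) ∧
      (∀ j ≤ 2 * m, F j = span k (e '' Set.Icc 1 j)) ∧
      ∀ j ≤ 2 * m, D j = span k (e '' ((⇑w⁻¹) '' Set.Icc 1 j)) := by
  obtain ⟨e, hli, -, -, hFe, hDe⟩ := had
  refine ⟨e, hli, fun j hj => ?_, fun j hj => ?_⟩ <;> rcases Nat.eq_zero_or_pos j with rfl | hj0
  · simp [hF0]
  · exact hFe j hj0 hj
  · simp [hD0]
  · rw [hDe j hj0 hj, Set.image_image]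

theorem Adapted.eqOn_relPos (hF : IsCompleteFlag F (2 * m)) (hD : IsCompleteFlag D (2 * m))
    (hw : w ∈ WC m) (had : Adapted m B F D w) : Set.EqOn w (relPos F D) (Set.Icc 1 (2 * m)) := by
  obtain ⟨e, hli, hFe, hDe⟩ := had.exists_linearIndepOn_span hF.bot hD.bot
  rintro i ⟨hi1, hi2⟩
  have hwi := (WC.apply_mem_Icc_iff hw).2 ⟨hi1, hi2⟩
  refine le_antisymm (not_lt.1 fun hlt => ?_) ((relPos_le_iff hD hwi.2).2 ?_)
  · set r := relPos F D i
    have hr : r ≤ 2 * m := relPos_le hD i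
    have hei : e i ∈ F i := hFe i hi2 ▸ subset_span ⟨i, ⟨hi1, le_rfl⟩, rfl⟩
    have hmem := le_sup_relPos hD i hei
    rw [hFe (i - 1) (by omega), hDe r hr, ← span_union, ← Set.image_union] at hmem
    have hsub : Set.Icc 1 (i - 1) ∪ (⇑w⁻¹) '' Set.Icc 1 r ⊆ Set.Icc 1 (2 * m) := by
      refine Set.union_subset (fun j hj => ⟨hj.1, by have := hj.2; omega⟩) ?_
      rintro _ ⟨l, hl, rfl⟩
      exact (WC.inv_apply_mem_Icc_iff hw).2 ⟨hl.1, by have := hl.2; omega⟩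
    refine ((hli.mono hsub).notMem_span_iff.2 ⟨hli.mono (Set.insert_subset ⟨hi1, hi2⟩ hsub), ?_⟩)
      hmem
    rintro (hj | ⟨l, hl, hli⟩)
    · have := hj.2
      omega
    · rw [← hli, show w (w⁻¹ l) = l from w.apply_symm_apply l] at hlt
      have := hl.2
      omega
  · rw [hFe i hi2, span_le]
    rintro _ ⟨j, hj, rfl⟩
    rcases (by have := hj.2; omega : j < i ∨ j = i) with hji | rfl
    · exact mem_sup_left (hFe (i - 1) (by omega) ▸ subset_span ⟨j, ⟨hj.1, by omega⟩, rfl⟩)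
    · exact mem_sup_right (hDe _ hwi.2 ▸
        subset_span ⟨j, ⟨w j, ⟨hwi.1, le_rfl⟩, w.symm_apply_apply j⟩, rfl⟩)

theorem exists_adapted [FiniteDimensional k V] (hdim : finrank k V = 2 * m) (hB : B.IsAlt)
    (hnd : B.Nondegenerate) (hF : IsCompleteSelfDualFlag B m F)
    (hD : IsCompleteSelfDualFlag B m D) : ∃ w ∈ WC m, Adapted m B F D w := by
  have hle : ∀ i ∈ Set.Icc 1 (2 * m), relPos F D i ≤ 2 * m := fun i _ =>
    relPos_le hD.toIsCompleteFlag i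
  have hinj := relPos_injOn hF.toIsCompleteFlag hD.toIsCompleteFlag
  have hsum : ∀ i ∈ Set.Icc 1 (2 * m), relPos F D i + relPos F D (2 * m + 1 - i) = 2 * m + 1 :=
    fun i hi => relPos_add_relPos_two_mul_add_one_sub hB.isRefl hnd hF hD hi.1 hi.2
  obtain ⟨w, hwσ, hfix⟩ := exists_perm_eqOn
    (fun i hi => ⟨one_le_relPos hF.toIsCompleteFlag hD.toIsCompleteFlag hi.1 hi.2, hle i hi⟩)
    hinj
  have hw : w ∈ WC m := mem_WC_of hfix fun i hi => by
    rw [hwσ hi, hwσ ⟨by have := hi.2; omega, by have := hi.1; omega⟩, hsum i hi]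
  obtain ⟨e, he⟩ := exists_isAdaptedFamily_relPos hF.toIsCompleteFlag hD.toIsCompleteFlag
  obtain ⟨u, hu, hanti⟩ := exists_isAdaptedFamily_isAntidiagonal hF hD hinj hle hsum hB he
  obtain ⟨v, hv, hpair⟩ := exists_isAdaptedFamily_standard hB hu hanti
  refine ⟨w, hw, adapted_of_isAdaptedFamily hdim hF.toIsCompleteFlag hD.toIsCompleteFlag hw
    (fun i hi => ?_) hpair⟩
  rw [hwσ hi]
  exact hv i hi

end Adapted

end

theorem stmt14_general {k : Type*} [Field k]
    {V : Type*} [AddCommGroup V] [Module k V] [FiniteDimensional k V]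
    (m : ℕ) (hdim : Module.finrank k V = 2 * m)
    (B : LinearMap.BilinForm k V) (halt : ∀ x, B x x = 0) (hnd : B.Nondegenerate)
    (F D : ℕ → Submodule k V)
    (hF : IsSelfDualFlag m B F) (hD : IsSelfDualFlag m B D) :
    ∃ w ∈ WC m, Adapted m B F D w ∧
      ∀ w' ∈ WC m, Adapted m B F D w' → w' = w := by
  have hB : B.IsAlt := halt
  have hF' := hF.isCompleteSelfDualFlag hdim hB.isRefl hnd
  have hD' := hD.isCompleteSelfDualFlag hdim hB.isRefl hnd
  obtain ⟨w, hw, had⟩ := exists_adapted hdim hB hnd hF' hD'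
  refine ⟨w, hw, had, fun w' hw' had' => WC.ext hw' hw ?_⟩
  exact (had'.eqOn_relPos hF'.toIsCompleteFlag hD'.toIsCompleteFlag hw').trans
    (had.eqOn_relPos hF'.toIsCompleteFlag hD'.toIsCompleteFlag hw).symm

/-- Classification of pairs of complete self-dual flags in a `2m`-dimensional
symplectic space: there is a unique `w ∈ W_C^m` admitting an adapted basis. -/
theorem stmt14 {k : Type*} [Field k] (hchar : ringChar k ≠ 2)
    {V : Type*} [AddCommGroup V] [Module k V] [FiniteDimensional k V]
    (m : ℕ) (hm : 1 ≤ m) (hdim : Module.finrank k V = 2 * m)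
    (B : LinearMap.BilinForm k V) (halt : ∀ x, B x x = 0) (hnd : B.Nondegenerate)
    (F D : ℕ → Submodule k V)
    (hF : IsSelfDualFlag m B F) (hD : IsSelfDualFlag m B D) :
    ∃ w ∈ WC m, Adapted m B F D w ∧
      ∀ w' ∈ WC m, Adapted m B F D w' → w' = w :=
  stmt14_general m hdim B halt hnd F D hF hD
end

section
/- Let 𝕜 be a field of characteristic ≠ 2 and V a 2m-dimensional 𝕜-vector space with a nondegenerate symmetric bilinear form. Let W ⊆ V be a totally isotropic subspace of dimension m−1 that is contained in at least one totally isotropic subspace of dimension m. Then there are exactly two totally isotropic subspaces of V of dimension m containing W, and both are contained in W^⊥. -/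
/-!
Every totally isotropic `U ⊇ W` lies in `N = W^⊥`, which has dimension `m + 1` and
contains `W` as its radical. Starting from the given `U₀ = W ⊕ k u`, nondegeneracy supplies
`v ∈ N` with `B u v = 1`, which can be corrected to be isotropic; then `N = W ⊕ k u ⊕ k v` and
`B (w + a u + b v) (w + a u + b v) = 2 a b`. Since `2 ≠ 0`, the isotropic lines of `N / W` are
exactly those of `u` and `v`, giving the two subspaces `W ⊕ k u` and `W ⊕ k v`.
-/

open Module Submodule

theorem Submodule.sup_span_singleton_eq_of_finrank_eq {k V : Type*} [Field k] [AddCommGroup V]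
    [Module k V] [FiniteDimensional k V] {W U : Submodule k V} {x : V} (hWU : W ≤ U)
    (hxU : x ∈ U) (hxW : x ∉ W) (hU : finrank k U = finrank k W + 1) :
    W ⊔ k ∙ x = U :=
  eq_of_le_of_finrank_eq (sup_le hWU ((span_singleton_le_iff_mem x U).mpr hxU))
    (by rw [finrank_sup_span_singleton hxW, hU])

namespace LinearMap.BilinForm

variable {k V : Type*} [Field k] [AddCommGroup V] [Module k V] {B : LinearMap.BilinForm k V}

def IsTotallyIsotropic (B : LinearMap.BilinForm k V) (U : Submodule k V) : Prop :=
  ∀ x ∈ U, ∀ y ∈ U, B x y = 0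

theorem IsTotallyIsotropic.mono {U U' : Submodule k V} (hU' : B.IsTotallyIsotropic U')
    (hle : U ≤ U') : B.IsTotallyIsotropic U :=
  fun x hx y hy => hU' x (hle hx) y (hle hy)

theorem IsTotallyIsotropic.le_orthogonal {W U : Submodule k V} (hU : B.IsTotallyIsotropic U)
    (hWU : W ≤ U) : U ≤ B.orthogonal W :=
  fun u hu w hw => hU w (hWU hw) u hu

theorem IsTotallyIsotropic.sup_span_singleton (hB : B.IsSymm) {W : Submodule k V} {v : V}
    (hW : B.IsTotallyIsotropic W) (hv : v ∈ B.orthogonal W) (hvv : B v v = 0) :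
    B.IsTotallyIsotropic (W ⊔ k ∙ v) := by
  have hWv : ∀ w ∈ W, B w v = 0 := hv
  intro x hx y hy
  obtain ⟨w, hw, _, hx', rfl⟩ := mem_sup.mp hx
  obtain ⟨w', hw', _, hy', rfl⟩ := mem_sup.mp hy
  obtain ⟨a, rfl⟩ := mem_span_singleton.mp hx'
  obtain ⟨b, rfl⟩ := mem_span_singleton.mp hy'
  simp [hW w hw w' hw', hWv w hw, hB.eq v w', hWv w' hw', hvv]

theorem exists_mem_orthogonal_apply_ne_zero [FiniteDimensional k V] (hnd : B.Nondegenerate)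
    (hB : B.IsRefl) {W : Submodule k V} {u : V} (hu : u ∉ W) :
    ∃ v ∈ B.orthogonal W, B u v ≠ 0 := by
  by_contra! h
  rw [← orthogonal_orthogonal hnd hB W] at hu
  exact hu fun v hv => hB _ _ (h v hv)

theorem exists_isotropic_partner (hB : B.IsSymm) (h2 : (2 : k) ≠ 0) {N : Submodule k V}
    {u v₁ : V} (hu : u ∈ N) (hv₁ : v₁ ∈ N) (huu : B u u = 0) (huv₁ : B u v₁ ≠ 0) :
    ∃ v ∈ N, B v v = 0 ∧ B u v = 1 := by
  set c := (B u v₁)⁻¹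
  set d := c ^ 2 * B v₁ v₁ / 2
  have hc : c * B u v₁ = 1 := inv_mul_cancel₀ huv₁
  have hd : 2 * d = c ^ 2 * B v₁ v₁ := mul_div_cancel₀ _ h2
  refine ⟨c • v₁ - d • u, N.sub_mem (N.smul_mem _ hv₁) (N.smul_mem _ hu), ?_, ?_⟩
  · simp only [map_sub, map_smul, LinearMap.sub_apply, LinearMap.smul_apply, smul_eq_mul,
      huu, hB.eq v₁ u]
    linear_combination (-2 * d) * hc - hd
  · simp [huu, hc]

theorem apply_add_smul_add_smul_self (hB : B.IsSymm) {w u v : V} (a b : k) (hww : B w w = 0)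
    (hwu : B w u = 0) (hwv : B w v = 0) (huu : B u u = 0) (hvv : B v v = 0) (huv : B u v = 1) :
    B (w + a • u + b • v) (w + a • u + b • v) = 2 * (a * b) := by
  simp only [map_add, map_smul, LinearMap.add_apply, LinearMap.smul_apply, smul_eq_mul,
    hB.eq u w, hB.eq v w, hB.eq v u, hww, hwu, hwv, huu, hvv, huv]
  ring

theorem IsTotallyIsotropic.eq_sup_span_singleton_or_eq [FiniteDimensional k V] (hB : B.IsSymm)
    (h2 : (2 : k) ≠ 0) {W U : Submodule k V} {u v : V} (hU : B.IsTotallyIsotropic U)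
    (hWU : W ≤ U) (hUdim : finrank k U = finrank k W + 1) (hUle : U ≤ W ⊔ k ∙ u ⊔ k ∙ v)
    (hu : u ∈ B.orthogonal W) (hv : v ∈ B.orthogonal W) (huu : B u u = 0) (hvv : B v v = 0)
    (huv : B u v = 1) : U = W ⊔ k ∙ u ∨ U = W ⊔ k ∙ v := by
  have huW : u ∉ W := fun h => one_ne_zero (huv ▸ hv u h)
  have hvW : v ∉ W := fun h => one_ne_zero (huv ▸ hB.eq u v ▸ hu v h)
  obtain ⟨x, hxU, hxW⟩ := SetLike.exists_of_lt (lt_of_le_of_ne hWU (by rintro rfl; omega))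
  obtain ⟨y, hy, _, hbv, rfl⟩ := mem_sup.mp (hUle hxU)
  obtain ⟨w, hw, _, hau, rfl⟩ := mem_sup.mp hy
  obtain ⟨a, rfl⟩ := mem_span_singleton.mp hau
  obtain ⟨b, rfl⟩ := mem_span_singleton.mp hbv
  have hab : 2 * (a * b) = 0 := by
    rw [← apply_add_smul_add_smul_self hB a b (hU w (hWU hw) w (hWU hw)) (hu w hw) (hv w hw)
      huu hvv huv]
    exact hU _ hxU _ hxU
  have hwU : w ∈ U := hWU hw
  rcases mul_eq_zero.mp ((mul_eq_zero.mp hab).resolve_left h2) with rfl | rfl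
  · have hb : b ≠ 0 := by rintro rfl; simp [hw] at hxW
    rw [zero_smul, add_zero] at hxU
    have hvU : v ∈ U := (U.smul_mem_iff hb).mp ((U.add_mem_iff_right hwU).mp hxU)
    exact Or.inr (sup_span_singleton_eq_of_finrank_eq hWU hvU hvW hUdim).symm
  · have ha : a ≠ 0 := by rintro rfl; simp [hw] at hxW
    rw [zero_smul, add_zero] at hxU
    have huU : u ∈ U := (U.smul_mem_iff ha).mp ((U.add_mem_iff_right hwU).mp hxU)
    exact Or.inl (sup_span_singleton_eq_of_finrank_eq hWU huU huW hUdim).symm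

end LinearMap.BilinForm

open LinearMap.BilinForm

theorem stmt18_general {k : Type*} [Field k] (hchar : ringChar k ≠ 2)
    {V : Type*} [AddCommGroup V] [Module k V] [FiniteDimensional k V]
    (m : ℕ) (hm : 1 ≤ m) (hdim : Module.finrank k V = 2 * m)
    (B : LinearMap.BilinForm k V) (hsymm : ∀ x y, B x y = B y x)
    (hnd : B.Nondegenerate)
    (W : Submodule k V)
    (hWdim : Module.finrank k W = m - 1)
    (hext : ∃ U : Submodule k V,
      (∀ x ∈ U, ∀ y ∈ U, B x y = 0) ∧ Module.finrank k U = m ∧ W ≤ U) :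
    ∃ U₁ U₂ : Submodule k V, U₁ ≠ U₂ ∧
      ((∀ x ∈ U₁, ∀ y ∈ U₁, B x y = 0) ∧ Module.finrank k U₁ = m ∧
        W ≤ U₁ ∧ U₁ ≤ B.orthogonal W) ∧
      ((∀ x ∈ U₂, ∀ y ∈ U₂, B x y = 0) ∧ Module.finrank k U₂ = m ∧
        W ≤ U₂ ∧ U₂ ≤ B.orthogonal W) ∧
      (∀ U : Submodule k V, (∀ x ∈ U, ∀ y ∈ U, B x y = 0) →
        Module.finrank k U = m → W ≤ U → U = U₁ ∨ U = U₂) := by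
  have h2 : (2 : k) ≠ 0 := Ring.two_ne_zero hchar
  have hB : B.IsSymm := ⟨hsymm⟩
  obtain ⟨U₀, hU₀ : B.IsTotallyIsotropic U₀, hU₀dim, hWU₀⟩ := hext
  obtain ⟨u, huU₀, huW⟩ :=
    SetLike.exists_of_lt (lt_of_le_of_ne hWU₀ (by rintro rfl; omega))
  obtain rfl : W ⊔ k ∙ u = U₀ :=
    sup_span_singleton_eq_of_finrank_eq hWU₀ huU₀ huW (by omega)
  have huN : u ∈ B.orthogonal W := hU₀.le_orthogonal hWU₀ huU₀
  have huu : B u u = 0 := hU₀ u huU₀ u huU₀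
  obtain ⟨v₁, hv₁N, huv₁⟩ := exists_mem_orthogonal_apply_ne_zero hnd hB.isRefl huW
  obtain ⟨v, hvN, hvv, huv⟩ := exists_isotropic_partner hB h2 huN hv₁N huu huv₁
  have hvU₀ : v ∉ W ⊔ k ∙ u := fun h => one_ne_zero (huv ▸ hU₀ u huU₀ v h)
  have hN : W ⊔ k ∙ u ⊔ k ∙ v = B.orthogonal W := by
    refine eq_of_le_of_finrank_eq
      (sup_le (hU₀.le_orthogonal hWU₀) ((span_singleton_le_iff_mem _ _).mpr hvN)) ?_
    rw [finrank_sup_span_singleton hvU₀, finrank_orthogonal hnd]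
    omega
  have hU₂ : B.IsTotallyIsotropic (W ⊔ k ∙ v) :=
    (hU₀.mono hWU₀).sup_span_singleton hB hvN hvv
  have hWU₂ : W ≤ W ⊔ k ∙ v := le_sup_left
  have hne : W ⊔ k ∙ u ≠ W ⊔ k ∙ v :=
    fun h => hvU₀ (h ▸ mem_sup_right (mem_span_singleton_self v))
  refine ⟨W ⊔ k ∙ u, W ⊔ k ∙ v, hne, ⟨hU₀, hU₀dim, hWU₀, hU₀.le_orthogonal hWU₀⟩,
    ⟨hU₂, ?_, hWU₂, hU₂.le_orthogonal hWU₂⟩, fun U (hU : B.IsTotallyIsotropic U) hUdim hWU => ?_⟩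
  · rw [finrank_sup_span_singleton fun h => hvU₀ (hWU₀ h)]
    omega
  · exact hU.eq_sup_span_singleton_or_eq hB h2 hWU (by omega) (hN ▸ hU.le_orthogonal hWU)
      huN hvN huu hvv huv

/-- In a `2m`-dimensional orthogonal space, a totally isotropic subspace `W` of
dimension `m−1` contained in some totally isotropic subspace of dimension `m` is
contained in exactly two such, and both lie in `W^⊥`. -/
theorem stmt18 {k : Type*} [Field k] (hchar : ringChar k ≠ 2)
    {V : Type*} [AddCommGroup V] [Module k V] [FiniteDimensional k V]
    (m : ℕ) (hm : 1 ≤ m) (hdim : Module.finrank k V = 2 * m)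
    (B : LinearMap.BilinForm k V) (hsymm : ∀ x y, B x y = B y x)
    (hnd : B.Nondegenerate)
    (W : Submodule k V) (hWiso : ∀ x ∈ W, ∀ y ∈ W, B x y = 0)
    (hWdim : Module.finrank k W = m - 1)
    (hext : ∃ U : Submodule k V,
      (∀ x ∈ U, ∀ y ∈ U, B x y = 0) ∧ Module.finrank k U = m ∧ W ≤ U) :
    ∃ U₁ U₂ : Submodule k V, U₁ ≠ U₂ ∧
      ((∀ x ∈ U₁, ∀ y ∈ U₁, B x y = 0) ∧ Module.finrank k U₁ = m ∧
        W ≤ U₁ ∧ U₁ ≤ B.orthogonal W) ∧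
      ((∀ x ∈ U₂, ∀ y ∈ U₂, B x y = 0) ∧ Module.finrank k U₂ = m ∧
        W ≤ U₂ ∧ U₂ ≤ B.orthogonal W) ∧
      (∀ U : Submodule k V, (∀ x ∈ U, ∀ y ∈ U, B x y = 0) →
        Module.finrank k U = m → W ≤ U → U = U₁ ∨ U = U₂) :=
  stmt18_general hchar m hm hdim B hsymm hnd W hWdim hext
end
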